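/- arXiv:2401.07110 — 4 statements merged into one kernel-verified Lean document; each statement's English description precedes it below -/
import Mathlib

section
/- Fix positive integers N, K, β > 0 and r ∈ (0,1], with the random patterns ξ and examples η^{μ,a} as in the context. For each M define the supervised Hebbian learning Hamiltonian H^Sup_M(σ) = −(1/(N·R_M))·∑_{μ=1}^K ∑_{1≤i<j≤N} ((1/M)·∑_{a=1}^M η_i^{μ,a})·((1/M)·∑_{b=1}^M η_j^{μ,b})·σ_i σ_j and the Hopfield Hamiltonian H^Hop(σ) = −(1/N)·∑_{μ=1}^K ∑_{1≤i<j≤N} ξ_i^μ ξ_j^μ σ_i σ_j. Then almost surely, for every σ ∈ {−1,+1}^N, the Boltzmann–Gibbs probability exp(−β·H^Sup_M(σ)) / ∑_{σ'} exp(−β·H^Sup_M(σ')) converges, as M → ∞, to exp(−β·H^Hop(σ)) / ∑_{σ'} exp(−β·H^Hop(σ')). -/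
open Finset MeasureTheory ProbabilityTheory Filter
open Topology

lemma map_two_point {Ω : Type} [MeasurableSpace Ω] (μ : Measure Ω) [IsProbabilityMeasure μ]
    (f : Ω → ℝ) (hf : Measurable f) (hrange : ∀ ω, f ω = 1 ∨ f ω = -1)
    (p q : ENNReal) (h1 : μ {ω | f ω = 1} = p) (h2 : μ {ω | f ω = -1} = q) :
    Measure.map f μ = p • Measure.dirac (1:ℝ) + q • Measure.dirac (-1:ℝ) := by
  have hA : MeasurableSet {ω | f ω = 1} := hf (measurableSet_singleton 1)
  have hB : MeasurableSet {ω | f ω = -1} := hf (measurableSet_singleton (-1))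
  have hdisj : Disjoint {ω | f ω = 1} {ω | f ω = -1} := by
    rw [Set.disjoint_left]; intro ω h1' h2'
    simp only [Set.mem_setOf_eq] at h1' h2'; norm_num [h1'] at h2'
  have hpq : p + q = 1 := by
    have hu : {ω | f ω = 1} ∪ {ω | f ω = -1} = Set.univ := by
      ext ω; rcases hrange ω with h | h <;> simp [h]
    have := measure_union (μ := μ) hdisj hB
    rw [hu, h1, h2] at this
    simpa using this.symm
  ext s hs
  rw [Measure.map_apply hf hs, Measure.add_apply, Measure.smul_apply, Measure.smul_apply,
    Measure.dirac_apply' _ hs, Measure.dirac_apply' _ hs]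
  by_cases h1s : (1:ℝ) ∈ s <;> by_cases h2s : (-1:ℝ) ∈ s
  · have hu : f ⁻¹' s = Set.univ := by
      ext ω; rcases hrange ω with h | h <;> simp [Set.mem_preimage, h, h1s, h2s]
    simp [hu, h1s, h2s, hpq, Set.indicator_apply]
  · have hu : f ⁻¹' s = {ω | f ω = 1} := by
      ext ω; rcases hrange ω with h | h
      · simp [Set.mem_preimage, h, h1s]
      · simp only [Set.mem_preimage, Set.mem_setOf_eq, h]
        constructor
        · intro hm; exact absurd hm h2s
        · intro hm; norm_num at hm
    simp [hu, h1, h1s, h2s, Set.indicator_apply]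
  · have hu : f ⁻¹' s = {ω | f ω = -1} := by
      ext ω; rcases hrange ω with h | h
      · simp only [Set.mem_preimage, Set.mem_setOf_eq, h]
        constructor
        · intro hm; exact absurd hm h1s
        · intro hm; norm_num at hm
      · simp [Set.mem_preimage, h, h2s]
    simp [hu, h2, h1s, h2s, Set.indicator_apply]
  · have hu : f ⁻¹' s = ∅ := by
      ext ω; rcases hrange ω with h | h <;>
        simp [Set.mem_preimage, h, h1s, h2s]
    simp [hu, h1s, h2s, Set.indicator_apply]

lemma integral_two_point {Ω : Type} [MeasurableSpace Ω] (μ : Measure Ω) [IsProbabilityMeasure μ]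
    (f : Ω → ℝ) (hf : Measurable f) (hrange : ∀ ω, f ω = 1 ∨ f ω = -1)
    (r : ℝ) (hr : 0 ≤ r) (h1 : μ {ω | f ω = 1} = ENNReal.ofReal ((1 + r) / 2)) :
    ∫ ω, f ω ∂μ = r := by
  have hA : MeasurableSet {ω | f ω = 1} := hf (measurableSet_singleton 1)
  have hfe : f = fun ω => Set.indicator {ω | f ω = 1} (fun _ => (2:ℝ)) ω - 1 := by
    funext ω
    rcases hrange ω with h | h
    · rw [Set.indicator_of_mem (by simpa using h)]; rw [h]; norm_num
    · rw [Set.indicator_of_notMem (by norm_num [h])]; rw [h]; norm_num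
  rw [hfe, integral_sub ((integrable_const (2:ℝ)).indicator hA) (integrable_const 1),
    integral_indicator_const _ hA, integral_const]
  rw [measureReal_def, h1, ENNReal.toReal_ofReal (by linarith : (0:ℝ) ≤ (1 + r) / 2)]
  simp only [measureReal_def, measure_univ, ENNReal.toReal_one, smul_eq_mul, one_mul]
  linarith

/-- The embedding of a Boolean spin into `ℝ`. -/
noncomputable def spin : Bool → ℝ := fun b => if b then 1 else -1

/-- almost surely, the Boltzmann–Gibbs probabilities of the
supervised Hebbian learning Hamiltonian converge, in the big-data limit
`M → ∞`, to those of the Hopfield Hamiltonian. -/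
theorem supervised_gibbs_tendsto_hopfield
    (N K : ℕ) (hN : 0 < N) (hK : 0 < K)
    (β r : ℝ) (hβ : 0 < β) (hr0 : 0 < r) (hr1 : r ≤ 1)
    {Ω : Type} [MeasurableSpace Ω] (μ : Measure Ω) [IsProbabilityMeasure μ]
    (ξ : Fin N → Fin K → Ω → ℝ) (χ : Fin N → Fin K → ℕ → Ω → ℝ)
    (hmeasξ : ∀ i k, Measurable (ξ i k))
    (hmeasχ : ∀ i k a, Measurable (χ i k a))
    (hrangeξ : ∀ i k ω, ξ i k ω = 1 ∨ ξ i k ω = -1)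
    (hrangeχ : ∀ i k a ω, χ i k a ω = 1 ∨ χ i k a ω = -1)
    (hlawξ : ∀ i k, μ {ω | ξ i k ω = 1} = ENNReal.ofReal (1 / 2)
      ∧ μ {ω | ξ i k ω = -1} = ENNReal.ofReal (1 / 2))
    (hlawχ : ∀ i k a, μ {ω | χ i k a ω = 1} = ENNReal.ofReal ((1 + r) / 2)
      ∧ μ {ω | χ i k a ω = -1} = ENNReal.ofReal ((1 - r) / 2))
    (hindep : iIndepFun
      (Sum.elim (fun q : Fin N × Fin K => ξ q.1 q.2)
        (fun q : Fin N × Fin K × ℕ => χ q.1 q.2.1 q.2.2)) μ)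
    (η : Fin N → Fin K → ℕ → Ω → ℝ)
    (hη : ∀ i k a ω, η i k a ω = χ i k a ω * ξ i k ω)
    (R : ℕ → ℝ) (hR : ∀ M, R M = r ^ 2 + (1 - r ^ 2) / (M : ℝ))
    (HSup : ℕ → (Fin N → Bool) → Ω → ℝ)
    (hHSup : ∀ M σ ω, HSup M σ ω = -(1 / ((N : ℝ) * R M)) * ∑ k : Fin K,
      ∑ i : Fin N, ∑ j : Fin N, if i < j then
        ((1 / (M : ℝ)) * ∑ a ∈ Finset.range M, η i k a ω)
          * ((1 / (M : ℝ)) * ∑ b ∈ Finset.range M, η j k b ω)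
          * spin (σ i) * spin (σ j) else 0)
    (HHop : (Fin N → Bool) → Ω → ℝ)
    (hHHop : ∀ σ ω, HHop σ ω = -(1 / (N : ℝ)) * ∑ k : Fin K,
      ∑ i : Fin N, ∑ j : Fin N, if i < j then
        ξ i k ω * ξ j k ω * spin (σ i) * spin (σ j) else 0) :
    ∀ᵐ ω ∂μ, ∀ σ : Fin N → Bool,
      Tendsto (fun M : ℕ =>
          Real.exp (-β * HSup M σ ω)
            / ∑ σ' : Fin N → Bool, Real.exp (-β * HSup M σ' ω))
        atTop
        (nhds (Real.exp (-β * HHop σ ω)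
          / ∑ σ' : Fin N → Bool, Real.exp (-β * HHop σ' ω))) := by
  have hNe : (N:ℝ) ≠ 0 := Nat.cast_ne_zero.2 hN.ne'
  have hr2 : r ^ 2 ≠ 0 := pow_ne_zero _ hr0.ne'
  have hslln : ∀ i : Fin N, ∀ k : Fin K,
      ∀ᵐ ω ∂μ, Tendsto (fun M : ℕ => (1/(M:ℝ)) * ∑ a ∈ Finset.range M, χ i k a ω)
        atTop (𝓝 r) := by
    intro i k
    have hint : Integrable (χ i k 0) μ :=
      (integrable_const (1:ℝ)).mono' (hmeasχ i k 0).aestronglyMeasurable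
        (Filter.Eventually.of_forall fun ω => by
          rcases hrangeχ i k 0 ω with h | h <;> simp [h])
    have hpind : Pairwise (Function.onFun (IndepFun · · μ) fun a => χ i k a) := by
      intro a b hab
      exact hindep.indepFun (i := Sum.inr (i, k, a)) (j := Sum.inr (i, k, b))
        (by simp [hab])
    have hident : ∀ a, IdentDistrib (χ i k a) (χ i k 0) μ μ := by
      intro a
      refine ⟨(hmeasχ i k a).aemeasurable, (hmeasχ i k 0).aemeasurable, ?_⟩
      rw [map_two_point μ _ (hmeasχ i k a) (hrangeχ i k a) _ _ (hlawχ i k a).1 (hlawχ i k a).2,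
        map_two_point μ _ (hmeasχ i k 0) (hrangeχ i k 0) _ _ (hlawχ i k 0).1 (hlawχ i k 0).2]
    have hsl := strong_law_ae_real (fun a => χ i k a) hint hpind hident
    have hr' : μ[(fun a => χ i k a) 0] = r :=
      integral_two_point μ _ (hmeasχ i k 0) (hrangeχ i k 0) r hr0.le (hlawχ i k 0).1
    rw [hr'] at hsl
    filter_upwards [hsl] with ω hω
    have heq : (fun M : ℕ => (1/(M:ℝ)) * ∑ a ∈ Finset.range M, χ i k a ω)
        = fun M : ℕ => (∑ a ∈ Finset.range M, χ i k a ω) / (M:ℝ) := by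
      funext M; ring
    rw [heq]
    exact hω
  have hae : ∀ᵐ ω ∂μ, ∀ i : Fin N, ∀ k : Fin K,
      Tendsto (fun M : ℕ => (1/(M:ℝ)) * ∑ a ∈ Finset.range M, χ i k a ω)
        atTop (𝓝 r) :=
    ae_all_iff.2 fun i => ae_all_iff.2 fun k => hslln i k
  filter_upwards [hae] with ω hω
  have havg : ∀ i k, Tendsto (fun M : ℕ => (1/(M:ℝ)) * ∑ a ∈ Finset.range M, η i k a ω)
      atTop (𝓝 (r * ξ i k ω)) := by
    intro i k
    have heq : (fun M : ℕ => (1/(M:ℝ)) * ∑ a ∈ Finset.range M, η i k a ω)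
        = fun M : ℕ => ((1/(M:ℝ)) * ∑ a ∈ Finset.range M, χ i k a ω) * ξ i k ω := by
      funext M
      simp only [hη, ← Finset.sum_mul]
      ring
    rw [heq]
    exact (hω i k).mul_const _
  have Htend : ∀ τ : Fin N → Bool,
      Tendsto (fun M : ℕ => HSup M τ ω) atTop (𝓝 (HHop τ ω)) := by
    intro τ
    have hRt : Tendsto (fun M : ℕ => R M) atTop (𝓝 (r^2)) := by
      have h2 : Tendsto (fun M : ℕ => (1 - r^2)/(M:ℝ)) atTop (𝓝 0) :=
        tendsto_const_nhds.div_atTop tendsto_natCast_atTop_atTop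
      simp only [hR]
      simpa using (tendsto_const_nhds (x := r^2)).add h2
    have hc : Tendsto (fun M : ℕ => -(1/((N:ℝ) * R M))) atTop
        (𝓝 (-(1/((N:ℝ)*r^2)))) := by
      have hden : Tendsto (fun M : ℕ => (N:ℝ) * R M) atTop (𝓝 ((N:ℝ) * r^2)) :=
        tendsto_const_nhds.mul hRt
      simpa [one_div] using (hden.inv₀ (mul_ne_zero hNe hr2)).neg
    have hS : Tendsto (fun M : ℕ => ∑ k : Fin K, ∑ i : Fin N, ∑ j : Fin N,
        if i < j then ((1/(M:ℝ)) * ∑ a ∈ Finset.range M, η i k a ω)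
          * ((1/(M:ℝ)) * ∑ b ∈ Finset.range M, η j k b ω)
          * spin (τ i) * spin (τ j) else 0)
        atTop (𝓝 (∑ k : Fin K, ∑ i : Fin N, ∑ j : Fin N,
        if i < j then (r * ξ i k ω) * (r * ξ j k ω) * spin (τ i) * spin (τ j) else 0)) := by
      refine tendsto_finset_sum _ fun k _ => tendsto_finset_sum _ fun i _ =>
        tendsto_finset_sum _ fun j _ => ?_
      by_cases hij : i < j
      · simp only [if_pos hij]
        exact (((havg i k).mul (havg j k)).mul_const _).mul_const _
      · simp only [if_neg hij]; exact tendsto_const_nhds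
    have hfin : -(1/((N:ℝ)*r^2)) * (∑ k : Fin K, ∑ i : Fin N, ∑ j : Fin N,
        if i < j then (r * ξ i k ω) * (r * ξ j k ω) * spin (τ i) * spin (τ j) else 0)
        = HHop τ ω := by
      rw [hHHop]
      have key : (∑ k : Fin K, ∑ i : Fin N, ∑ j : Fin N,
          if i < j then (r * ξ i k ω) * (r * ξ j k ω) * spin (τ i) * spin (τ j) else 0)
          = r^2 * ∑ k : Fin K, ∑ i : Fin N, ∑ j : Fin N,
          if i < j then ξ i k ω * ξ j k ω * spin (τ i) * spin (τ j) else 0 := by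
        simp only [Finset.mul_sum]
        refine Finset.sum_congr rfl fun k _ => Finset.sum_congr rfl fun i _ =>
          Finset.sum_congr rfl fun j _ => ?_
        by_cases hij : i < j
        · simp only [if_pos hij]; ring
        · simp [hij]
      rw [key]
      field_simp
    rw [← hfin]
    simp only [hHSup]
    exact hc.mul hS
  intro σ
  have hexp : ∀ τ : Fin N → Bool,
      Tendsto (fun M : ℕ => Real.exp (-β * HSup M τ ω)) atTop
        (𝓝 (Real.exp (-β * HHop τ ω))) := fun τ =>
    (Real.continuous_exp.tendsto _).comp ((Htend τ).const_mul (-β))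
  have hdenpos : 0 < ∑ σ' : Fin N → Bool, Real.exp (-β * HHop σ' ω) :=
    Finset.sum_pos (fun _ _ => Real.exp_pos _) Finset.univ_nonempty
  exact (hexp σ).div (tendsto_finset_sum _ fun τ _ => hexp τ) hdenpos.ne'
end

section
/- Fix positive integers N, K, β > 0 and r ∈ (0,1], with the random patterns ξ and examples η^{μ,a} as in the context. For each M define the unsupervised Hebbian learning Hamiltonian H^Uns_M(σ) = −(1/(N·R_M·M))·∑_{μ=1}^K ∑_{a=1}^M ∑_{1≤i<j≤N} η_i^{μ,a}·η_j^{μ,a}·σ_i σ_j and the Hopfield Hamiltonian H^Hop(σ) = −(1/N)·∑_{μ=1}^K ∑_{1≤i<j≤N} ξ_i^μ ξ_j^μ σ_i σ_j. Then almost surely, for every σ ∈ {−1,+1}^N, the Boltzmann–Gibbs probability exp(−β·H^Uns_M(σ)) / ∑_{σ'} exp(−β·H^Uns_M(σ')) converges, as M → ∞, to exp(−β·H^Hop(σ)) / ∑_{σ'} exp(−β·H^Hop(σ')). -/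
open Finset MeasureTheory ProbabilityTheory Filter

section Helpers

variable {Ω : Type} [MeasurableSpace Ω] {μ : MeasureTheory.Measure Ω}
  [IsProbabilityMeasure μ] {f g : Ω → ℝ}

lemma pm_map (hfm : Measurable f) (hf : ∀ ω, f ω = 1 ∨ f ω = -1) :
    Measure.map f μ = μ (f ⁻¹' {1}) • Measure.dirac (1 : ℝ)
      + μ ((f ⁻¹' {1})ᶜ) • Measure.dirac (-1 : ℝ) := by
  have hcompl : (f ⁻¹' {1})ᶜ = f ⁻¹' {-1} := by
    ext ω
    rcases hf ω with h | h <;>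
      simp only [Set.mem_compl_iff, Set.mem_preimage, Set.mem_singleton_iff, h] <;> norm_num
  ext s hs
  rw [Measure.map_apply hfm hs]
  rw [Measure.add_apply, Measure.smul_apply, Measure.smul_apply,
    Measure.dirac_apply' _ hs, Measure.dirac_apply' _ hs, hcompl]
  by_cases h1 : (1 : ℝ) ∈ s <;> by_cases h2 : (-1 : ℝ) ∈ s
  · rw [Set.indicator_of_mem h1, Set.indicator_of_mem h2]
    have hsplit : f ⁻¹' s = f ⁻¹' {1} ∪ f ⁻¹' {-1} := by
      ext ω
      rcases hf ω with h | h <;>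
        simp only [Set.mem_preimage, Set.mem_singleton_iff, Set.mem_union, h] <;> tauto
    have hdisj : Disjoint (f ⁻¹' {1}) (f ⁻¹' {-1}) := by
      rw [Set.disjoint_left]
      intro ω hω hω'
      simp only [Set.mem_preimage, Set.mem_singleton_iff] at hω hω'
      rw [hω] at hω'; norm_num at hω'
    rw [hsplit, measure_union hdisj (hfm (measurableSet_singleton _))]
    simp
  · rw [Set.indicator_of_mem h1, Set.indicator_of_notMem h2]
    have hsplit : f ⁻¹' s = f ⁻¹' {1} := by
      ext ω
      rcases hf ω with h | h <;>
          simp only [Set.mem_preimage, Set.mem_singleton_iff, h]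
      · tauto
      · constructor
        · intro hmem; exact absurd hmem h2
        · intro hmem; norm_num at hmem
    rw [hsplit]
    simp
  · rw [Set.indicator_of_notMem h1, Set.indicator_of_mem h2]
    have hsplit : f ⁻¹' s = f ⁻¹' {-1} := by
      ext ω
      rcases hf ω with h | h <;>
          simp only [Set.mem_preimage, Set.mem_singleton_iff, h]
      · constructor
        · intro hmem; exact absurd hmem h1
        · intro hmem; norm_num at hmem
      · tauto
    rw [hsplit]
    simp
  · rw [Set.indicator_of_notMem h1, Set.indicator_of_notMem h2]
    have hsplit : f ⁻¹' s = ∅ := by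
      ext ω
      rcases hf ω with h | h <;>
        simp only [Set.mem_preimage, Set.mem_empty_iff_false, iff_false, h]
      · exact h1
      · exact h2
    simp [hsplit]

lemma pm_identDistrib (hfm : Measurable f) (hgm : Measurable g)
    (hf : ∀ ω, f ω = 1 ∨ f ω = -1) (hg : ∀ ω, g ω = 1 ∨ g ω = -1)
    (h : μ (f ⁻¹' {1}) = μ (g ⁻¹' {1})) : IdentDistrib f g μ μ := by
  refine ⟨hfm.aemeasurable, hgm.aemeasurable, ?_⟩
  rw [pm_map hfm hf, pm_map hgm hg, h]
  have : μ ((f ⁻¹' {1})ᶜ) = μ ((g ⁻¹' {1})ᶜ) := by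
    rw [measure_compl (hfm (measurableSet_singleton _)) (measure_ne_top μ _),
      measure_compl (hgm (measurableSet_singleton _)) (measure_ne_top μ _), h]
  rw [this]

lemma pm_integrable (hfm : Measurable f) (hf : ∀ ω, f ω = 1 ∨ f ω = -1) :
    Integrable f μ := by
  refine (integrable_const (1 : ℝ)).mono' hfm.aestronglyMeasurable
    (Filter.Eventually.of_forall fun ω => ?_)
  rcases hf ω with h | h <;> rw [h] <;> simp

lemma pm_integral (hfm : Measurable f) (hf : ∀ ω, f ω = 1 ∨ f ω = -1) :
    ∫ ω, f ω ∂μ = 2 * (μ (f ⁻¹' {1})).toReal - 1 := by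
  have hA : MeasurableSet (f ⁻¹' {1}) := hfm (measurableSet_singleton _)
  have hrw : (∫ ω, f ω ∂μ)
      = ∫ ω, (2 * Set.indicator (f ⁻¹' {1}) (fun _ => (1 : ℝ)) ω - 1) ∂μ := by
    refine integral_congr_ae (Filter.Eventually.of_forall fun ω => ?_)
    show f ω = 2 * (f ⁻¹' {1}).indicator (fun _ => (1 : ℝ)) ω - 1
    rcases hf ω with h | h
    · rw [h, Set.indicator_of_mem (show ω ∈ f ⁻¹' {1} from h)]; norm_num
    · rw [h, Set.indicator_of_notMem (show ω ∉ f ⁻¹' {1} by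
        intro hm
        rw [Set.mem_preimage, Set.mem_singleton_iff, h] at hm
        norm_num at hm)]
      norm_num
  rw [hrw]
  rw [integral_sub (((integrable_const (1:ℝ)).indicator hA).const_mul 2) (integrable_const 1)]
  rw [integral_const_mul, integral_indicator_const (1:ℝ) hA, integral_const]
  simp [smul_eq_mul]
  rfl

end Helpers

/-- almost surely, the Boltzmann–Gibbs probabilities of the
unsupervised Hebbian learning Hamiltonian converge, in the big-data limit
`M → ∞`, to those of the Hopfield Hamiltonian. -/
theorem unsupervised_gibbs_tendsto_hopfield
    (N K : ℕ) (hN : 0 < N) (hK : 0 < K)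
    (β r : ℝ) (hβ : 0 < β) (hr0 : 0 < r) (hr1 : r ≤ 1)
    {Ω : Type} [MeasurableSpace Ω] (μ : Measure Ω) [IsProbabilityMeasure μ]
    (ξ : Fin N → Fin K → Ω → ℝ) (χ : Fin N → Fin K → ℕ → Ω → ℝ)
    (hmeasξ : ∀ i k, Measurable (ξ i k))
    (hmeasχ : ∀ i k a, Measurable (χ i k a))
    (hrangeξ : ∀ i k ω, ξ i k ω = 1 ∨ ξ i k ω = -1)
    (hrangeχ : ∀ i k a ω, χ i k a ω = 1 ∨ χ i k a ω = -1)
    (hlawξ : ∀ i k, μ {ω | ξ i k ω = 1} = ENNReal.ofReal (1 / 2)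
      ∧ μ {ω | ξ i k ω = -1} = ENNReal.ofReal (1 / 2))
    (hlawχ : ∀ i k a, μ {ω | χ i k a ω = 1} = ENNReal.ofReal ((1 + r) / 2)
      ∧ μ {ω | χ i k a ω = -1} = ENNReal.ofReal ((1 - r) / 2))
    (hindep : iIndepFun
      (Sum.elim (fun q : Fin N × Fin K => ξ q.1 q.2)
        (fun q : Fin N × Fin K × ℕ => χ q.1 q.2.1 q.2.2)) μ)
    (η : Fin N → Fin K → ℕ → Ω → ℝ)
    (hη : ∀ i k a ω, η i k a ω = χ i k a ω * ξ i k ω)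
    (R : ℕ → ℝ) (hR : ∀ M, R M = r ^ 2 + (1 - r ^ 2) / (M : ℝ))
    (HUns : ℕ → (Fin N → Bool) → Ω → ℝ)
    (hHUns : ∀ M σ ω, HUns M σ ω = -(1 / ((N : ℝ) * R M * M)) * ∑ k : Fin K,
      ∑ a ∈ Finset.range M, ∑ i : Fin N, ∑ j : Fin N, if i < j then
        η i k a ω * η j k a ω * spin (σ i) * spin (σ j) else 0)
    (HHop : (Fin N → Bool) → Ω → ℝ)
    (hHHop : ∀ σ ω, HHop σ ω = -(1 / (N : ℝ)) * ∑ k : Fin K,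
      ∑ i : Fin N, ∑ j : Fin N, if i < j then
        ξ i k ω * ξ j k ω * spin (σ i) * spin (σ j) else 0) :
    ∀ᵐ ω ∂μ, ∀ σ : Fin N → Bool,
      Tendsto (fun M : ℕ =>
          Real.exp (-β * HUns M σ ω)
            / ∑ σ' : Fin N → Bool, Real.exp (-β * HUns M σ' ω))
        atTop
        (nhds (Real.exp (-β * HHop σ ω)
          / ∑ σ' : Fin N → Bool, Real.exp (-β * HHop σ' ω))) := by
  classical
  have hp0 : 0 ≤ (1 + r) / 2 := by linarith
  have hq0 : 0 ≤ (1 - r) / 2 := by linarith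
  have hmeasF : ∀ q, Measurable ((Sum.elim (fun q : Fin N × Fin K => ξ q.1 q.2)
      (fun q : Fin N × Fin K × ℕ => χ q.1 q.2.1 q.2.2)) q) := by
    rintro (⟨i, k⟩ | ⟨i, k, a⟩)
    · exact hmeasξ i k
    · exact hmeasχ i k a
  have hchi_indep : ∀ (i j : Fin N) (k : Fin K) (a b : ℕ), i ≠ j →
      IndepFun (χ i k a) (χ j k b) μ := by
    intro i j k a b hij
    apply hindep.indepFun
      (i := Sum.inr (i, k, a)) (j := Sum.inr (j, k, b))
    simp only [ne_eq, Sum.inr.injEq, Prod.mk.injEq, not_and]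
    intro h; exact absurd h hij
  have hlaw1 : ∀ i k a, μ (χ i k a ⁻¹' {1}) = ENNReal.ofReal ((1 + r) / 2) := by
    intro i k a
    exact (hlawχ i k a).1
  have hlawm1 : ∀ i k a, μ (χ i k a ⁻¹' {-1}) = ENNReal.ofReal ((1 - r) / 2) := by
    intro i k a
    exact (hlawχ i k a).2
  -- Strong law of large numbers for the products χ i k a * χ j k a
  have hslln : ∀ (i j : Fin N) (k : Fin K), i ≠ j →
      ∀ᵐ ω ∂μ, Tendsto
        (fun M : ℕ => (∑ a ∈ Finset.range M, χ i k a ω * χ j k a ω) / M)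
        atTop (nhds (r ^ 2)) := by
    intro i j k hij
    set Y : ℕ → Ω → ℝ := fun a => χ i k a * χ j k a with hY
    have hYm : ∀ a, Measurable (Y a) := fun a => (hmeasχ i k a).mul (hmeasχ j k a)
    have hYpm : ∀ a ω, Y a ω = 1 ∨ Y a ω = -1 := by
      intro a ω
      rcases hrangeχ i k a ω with h1 | h1 <;> rcases hrangeχ j k a ω with h2 | h2 <;>
        simp [hY, Pi.mul_apply, h1, h2]
    have hYone : ∀ a, μ (Y a ⁻¹' {1})
        = ENNReal.ofReal ((1 + r) / 2) * ENNReal.ofReal ((1 + r) / 2)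
          + ENNReal.ofReal ((1 - r) / 2) * ENNReal.ofReal ((1 - r) / 2) := by
      intro a
      have hsplit : Y a ⁻¹' {1}
          = (χ i k a ⁻¹' {1} ∩ χ j k a ⁻¹' {1})
            ∪ (χ i k a ⁻¹' {-1} ∩ χ j k a ⁻¹' {-1}) := by
        ext ω
        rcases hrangeχ i k a ω with h1 | h1 <;> rcases hrangeχ j k a ω with h2 | h2 <;>
          simp [hY, Pi.mul_apply, h1, h2] <;> norm_num
      have hmeas2 : MeasurableSet (χ i k a ⁻¹' {-1} ∩ χ j k a ⁻¹' {-1}) :=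
        ((hmeasχ i k a) (measurableSet_singleton _)).inter
          ((hmeasχ j k a) (measurableSet_singleton _))
      have hdisj : Disjoint (χ i k a ⁻¹' {1} ∩ χ j k a ⁻¹' {1})
          (χ i k a ⁻¹' {-1} ∩ χ j k a ⁻¹' {-1}) := by
        rw [Set.disjoint_left]
        rintro ω ⟨h1, _⟩ ⟨h3, _⟩
        simp only [Set.mem_preimage, Set.mem_singleton_iff] at h1 h3
        rw [h1] at h3; norm_num at h3
      rw [hsplit, measure_union hdisj hmeas2,
        (hchi_indep i j k a a hij).measure_inter_preimage_eq_mul _ _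
          (measurableSet_singleton _) (measurableSet_singleton _),
        (hchi_indep i j k a a hij).measure_inter_preimage_eq_mul _ _
          (measurableSet_singleton _) (measurableSet_singleton _),
        hlaw1, hlaw1, hlawm1, hlawm1]
    have hident : ∀ a, IdentDistrib (Y a) (Y 0) μ μ := fun a =>
      pm_identDistrib (hYm a) (hYm 0) (hYpm a) (hYpm 0) (by rw [hYone a, hYone 0])
    have hYindep : Pairwise (Function.onFun (IndepFun · · μ) Y) := by
      intro a b hab
      exact hindep.indepFun_mul_mul hmeasF
        (Sum.inr (i, k, a)) (Sum.inr (j, k, a)) (Sum.inr (i, k, b)) (Sum.inr (j, k, b))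
        (by simp only [ne_eq, Sum.inr.injEq, Prod.mk.injEq, not_and]; intro _ _; exact hab)
        (by simp only [ne_eq, Sum.inr.injEq, Prod.mk.injEq, not_and]; intro h; exact absurd h hij)
        (by simp only [ne_eq, Sum.inr.injEq, Prod.mk.injEq, not_and];
            intro h; exact absurd h.symm hij)
        (by simp only [ne_eq, Sum.inr.injEq, Prod.mk.injEq, not_and]; intro _ _; exact hab)
    have hEχ : ∀ i' : Fin N, ∫ ω, χ i' k 0 ω ∂μ = r := by
      intro i'
      rw [pm_integral (hmeasχ i' k 0) (hrangeχ i' k 0), hlaw1 i' k 0,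
        ENNReal.toReal_ofReal hp0]
      ring
    have hEY : ∫ ω, Y 0 ω ∂μ = r ^ 2 := by
      have h := (hchi_indep i j k 0 0 hij).integral_mul_eq_mul_integral
        (hmeasχ i k 0).aestronglyMeasurable (hmeasχ j k 0).aestronglyMeasurable
      calc ∫ ω, Y 0 ω ∂μ = ∫ ω, (χ i k 0 * χ j k 0) ω ∂μ := rfl
        _ = (∫ ω, χ i k 0 ω ∂μ) * ∫ ω, χ j k 0 ω ∂μ := h
        _ = r ^ 2 := by rw [hEχ i, hEχ j]; ring
    have h := strong_law_ae_real Y (pm_integrable (hYm 0) (hYpm 0)) hYindep hident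
    filter_upwards [h] with ω hω
    have : (∫ ω, Y 0 ω ∂μ) = r ^ 2 := hEY
    rw [this] at hω
    exact hω
  -- combine to a single a.s. event
  have hae : ∀ᵐ ω ∂μ, ∀ (i j : Fin N) (k : Fin K), i ≠ j →
      Tendsto (fun M : ℕ => (∑ a ∈ Finset.range M, χ i k a ω * χ j k a ω) / M)
        atTop (nhds (r ^ 2)) := by
    rw [ae_all_iff]; intro i
    rw [ae_all_iff]; intro j
    rw [ae_all_iff]; intro k
    by_cases hij : i = j
    · exact Filter.Eventually.of_forall fun ω h => absurd hij h
    · filter_upwards [hslln i j k hij] with ω hω _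
      exact hω
  -- the deterministic part
  have hr2 : (r : ℝ) ^ 2 ≠ 0 := pow_ne_zero _ (ne_of_gt hr0)
  have hRt : Tendsto (fun M : ℕ => R M) atTop (nhds (r ^ 2)) := by
    have h0 : Tendsto (fun M : ℕ => (1 - r ^ 2) / (M : ℝ)) atTop (nhds 0) := by
      have := tendsto_one_div_atTop_nhds_zero_nat.const_mul (1 - r ^ 2)
      simpa [mul_one_div, div_eq_mul_inv] using this
    have := (tendsto_const_nhds (x := r ^ 2) (f := atTop)).add h0
    simp only [add_zero] at this
    simpa only [hR] using this
  filter_upwards [hae] with ω hω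
  have hHlim : ∀ σ' : Fin N → Bool,
      Tendsto (fun M => HUns M σ' ω) atTop (nhds (HHop σ' ω)) := by
    intro σ'
    have hrepr : ∀ M : ℕ, HUns M σ' ω = ∑ k : Fin K, ∑ i : Fin N, ∑ j : Fin N,
        (if i < j then
          (-(1 / (N : ℝ)) * (ξ i k ω * ξ j k ω * spin (σ' i) * spin (σ' j)))
            * ((∑ a ∈ Finset.range M, χ i k a ω * χ j k a ω) / M / R M)
          else 0) := by
      intro M
      rw [hHUns, Finset.mul_sum]
      refine Finset.sum_congr rfl fun k _ => ?_
      have inner : (∑ a ∈ Finset.range M, ∑ i : Fin N, ∑ j : Fin N,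
            if i < j then η i k a ω * η j k a ω * spin (σ' i) * spin (σ' j) else 0)
          = ∑ i : Fin N, ∑ j : Fin N, (if i < j then
              (∑ a ∈ Finset.range M, χ i k a ω * χ j k a ω)
                * (ξ i k ω * ξ j k ω * spin (σ' i) * spin (σ' j)) else 0) := by
        rw [Finset.sum_comm]
        refine Finset.sum_congr rfl fun i _ => ?_
        rw [Finset.sum_comm]
        refine Finset.sum_congr rfl fun j _ => ?_
        by_cases hij : i < j
        · simp only [hij, if_true]
          rw [Finset.sum_mul]
          refine Finset.sum_congr rfl fun a _ => ?_
          rw [hη, hη]; ring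
        · simp [hij]
      rw [inner, Finset.mul_sum]
      refine Finset.sum_congr rfl fun i _ => ?_
      rw [Finset.mul_sum]
      refine Finset.sum_congr rfl fun j _ => ?_
      by_cases hij : i < j
      · simp only [hij, if_true]
        ring
      · simp [hij]
    have hreprH : HHop σ' ω = ∑ k : Fin K, ∑ i : Fin N, ∑ j : Fin N,
        (if i < j then
          (-(1 / (N : ℝ)) * (ξ i k ω * ξ j k ω * spin (σ' i) * spin (σ' j))) else 0) := by
      rw [hHHop]
      simp only [Finset.mul_sum, mul_ite, mul_zero]
    rw [hreprH]
    simp only [hrepr]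
    refine tendsto_finset_sum _ fun k _ => tendsto_finset_sum _ fun i _ =>
      tendsto_finset_sum _ fun j _ => ?_
    by_cases hij : i < j
    · simp only [hij, if_true]
      have hT : Tendsto
          (fun M : ℕ => (∑ a ∈ Finset.range M, χ i k a ω * χ j k a ω) / M / R M)
          atTop (nhds 1) := by
        have := (hω i j k (ne_of_lt hij)).div hRt hr2
        rw [div_self hr2] at this; exact this
      have := hT.const_mul
        (-(1 / (N : ℝ)) * (ξ i k ω * ξ j k ω * spin (σ' i) * spin (σ' j)))
      simpa using this
    · simp [hij]
  intro σ
  have hnum : ∀ σ' : Fin N → Bool,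
      Tendsto (fun M => Real.exp (-β * HUns M σ' ω)) atTop
        (nhds (Real.exp (-β * HHop σ' ω))) := fun σ' =>
    (Real.continuous_exp.tendsto _).comp ((hHlim σ').const_mul (-β))
  have hden : Tendsto (fun M => ∑ σ' : Fin N → Bool, Real.exp (-β * HUns M σ' ω)) atTop
      (nhds (∑ σ' : Fin N → Bool, Real.exp (-β * HHop σ' ω))) :=
    tendsto_finset_sum _ fun σ' _ => hnum σ'
  have hpos : 0 < ∑ σ' : Fin N → Bool, Real.exp (-β * HHop σ' ω) :=
    Finset.sum_pos (fun _ _ => Real.exp_pos _) Finset.univ_nonempty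
  exact (hnum σ).div hden (ne_of_gt hpos)
end

section
/- Fix positive integers N, K, β > 0 and r ∈ (0,1], with the random patterns ξ and examples η^{μ,a} as in the context. For each M ≥ 1 define the supervised free energy A_{N,M} = (1/N)·E[ log ∑_{σ∈{−1,+1}^N} exp( (β/(N·R_M))·∑_{μ=1}^K ∑_{1≤i<j≤N} ((1/M)·∑_{a=1}^M η_i^{μ,a})·((1/M)·∑_{b=1}^M η_j^{μ,b})·σ_i σ_j ) ] and the Hopfield free energy A_N = (1/N)·E[ log ∑_{σ∈{−1,+1}^N} exp( (β/N)·∑_{μ=1}^K ∑_{1≤i<j≤N} ξ_i^μ ξ_j^μ σ_i σ_j ) ]. Then lim_{M→∞} A_{N,M} = A_N. -/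
open Finset MeasureTheory ProbabilityTheory Filter

section AuxLemmas

variable {Ω : Type*} [MeasurableSpace Ω] {μ : Measure Ω}

lemma lse_half {S : Type*} [Fintype S] [Nonempty S] (f g : S → ℝ) (δ : ℝ)
    (h : ∀ s, f s - g s ≤ δ) :
    Real.log (∑ s, Real.exp (f s)) - Real.log (∑ s, Real.exp (g s)) ≤ δ := by
  have hpos : (0:ℝ) < ∑ s, Real.exp (g s) :=
    Finset.sum_pos (fun s _ => Real.exp_pos _) Finset.univ_nonempty
  have hle : ∑ s, Real.exp (f s) ≤ Real.exp δ * ∑ s, Real.exp (g s) := by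
    rw [Finset.mul_sum]
    refine Finset.sum_le_sum fun s _ => ?_
    rw [← Real.exp_add]
    exact Real.exp_le_exp.2 (by linarith [h s])
  have h1 : Real.log (∑ s, Real.exp (f s)) ≤ Real.log (Real.exp δ * ∑ s, Real.exp (g s)) :=
    Real.log_le_log (Finset.sum_pos (fun s _ => Real.exp_pos _) Finset.univ_nonempty) hle
  rw [Real.log_mul (Real.exp_ne_zero _) (ne_of_gt hpos), Real.log_exp] at h1
  linarith

lemma lse_lipschitz {S : Type*} [Fintype S] [Nonempty S] (f g : S → ℝ) (δ : ℝ)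
    (h : ∀ s, |f s - g s| ≤ δ) :
    |Real.log (∑ s, Real.exp (f s)) - Real.log (∑ s, Real.exp (g s))| ≤ δ := by
  rw [abs_sub_le_iff]
  constructor
  · exact lse_half f g δ fun s => (abs_le.1 (h s)).2
  · exact lse_half g f δ fun s => by have := (abs_le.1 (h s)).1; linarith

lemma integrable_of_bound [IsProbabilityMeasure μ] (f : Ω → ℝ) (C : ℝ) (hm : Measurable f)
    (hb : ∀ ω, |f ω| ≤ C) : Integrable f μ :=
  (integrable_const C).mono' hm.aestronglyMeasurable
    (Filter.Eventually.of_forall (by simpa [Real.norm_eq_abs] using hb))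

lemma sq_integral_abs_le (μ : Measure Ω)
    [IsProbabilityMeasure μ] (f : Ω → ℝ) (hf : Integrable f μ)
    (hf2 : Integrable (fun ω => f ω ^ 2) μ) :
    (∫ ω, |f ω| ∂μ) ^ 2 ≤ ∫ ω, f ω ^ 2 ∂μ := by
  set m := ∫ ω, |f ω| ∂μ with hm
  have hfa : Integrable (fun ω => |f ω|) μ := hf.abs
  have hexp : ∀ ω, (|f ω| - m) ^ 2 = f ω ^ 2 - (2 * m) * |f ω| + m ^ 2 := by
    intro ω; rw [sub_sq, sq_abs]; ring
  have h0 : (0:ℝ) ≤ ∫ ω, (|f ω| - m) ^ 2 ∂μ :=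
    integral_nonneg fun ω => sq_nonneg _
  have hint : ∫ ω, (|f ω| - m) ^ 2 ∂μ = (∫ ω, f ω ^ 2 ∂μ) - 2 * m * m + m ^ 2 := by
    simp_rw [hexp]
    have hi1 : Integrable (fun ω => f ω ^ 2 - 2 * m * |f ω|) μ :=
      hf2.sub (hfa.const_mul (2 * m))
    have hi2 : Integrable (fun ω => 2 * m * |f ω|) μ := hfa.const_mul (2 * m)
    rw [show (fun ω => f ω ^ 2 - 2 * m * |f ω| + m ^ 2)
        = fun ω => (f ω ^ 2 - 2 * m * |f ω|) + m ^ 2 from rfl,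
      integral_add hi1 (integrable_const _), integral_sub hf2 hi2,
      MeasureTheory.integral_const_mul, integral_const]
    simp [← hm]
  nlinarith [h0, hint]

lemma integral_pm_one [IsProbabilityMeasure μ] (f : Ω → ℝ) (p : ℝ) (hp : 0 ≤ p)
    (hm : Measurable f) (hr : ∀ ω, f ω = 1 ∨ f ω = -1)
    (hlaw : μ {ω | f ω = 1} = ENNReal.ofReal p) :
    ∫ ω, f ω ∂μ = 2 * p - 1 := by
  have hs : MeasurableSet {ω | f ω = 1} := hm (measurableSet_singleton 1)
  have hrepr : (fun ω => f ω)
      = fun ω => 2 * Set.indicator {ω | f ω = 1} (fun _ => (1:ℝ)) ω - 1 := by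
    funext ω
    rcases hr ω with h | h
    · rw [h, Set.indicator_of_mem (by simpa [Set.mem_setOf_eq] using h)]; norm_num
    · rw [h, Set.indicator_of_notMem (by simp [Set.mem_setOf_eq, h]; norm_num)]; norm_num
  have hind : Integrable (Set.indicator {ω | f ω = 1} (fun _ => (1:ℝ))) μ :=
    (integrable_const (1:ℝ)).indicator hs
  rw [show (∫ ω, f ω ∂μ) = ∫ ω, 2 * Set.indicator {ω | f ω = 1} (fun _ => (1:ℝ)) ω - 1 ∂μ
      from by rw [← hrepr]]
  rw [integral_sub (hind.const_mul 2) (integrable_const 1),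
    MeasureTheory.integral_const_mul, integral_indicator_const (1:ℝ) hs, integral_const,
    measureReal_def, hlaw]
  simp [ENNReal.toReal_ofReal hp]

lemma logZ_meas {N : ℕ} (H : (Fin N → Bool) → Ω → ℝ) (hmeas : ∀ σ, Measurable (H σ)) :
    Measurable (fun ω => Real.log (∑ σ : Fin N → Bool, Real.exp (H σ ω))) :=
  (Finset.measurable_sum _ fun σ _ => (Real.measurable_exp.comp (hmeas σ))).log

lemma logZ_bound {N : ℕ} (H : (Fin N → Bool) → Ω → ℝ) (C : ℝ)
    (hC : ∀ σ ω, |H σ ω| ≤ C) (ω : Ω) :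
    |Real.log (∑ σ : Fin N → Bool, Real.exp (H σ ω))|
      ≤ |Real.log ((Fintype.card (Fin N → Bool) : ℝ))| + C := by
  have h := lse_lipschitz (fun σ => H σ ω) (fun _ => (0:ℝ)) C (fun σ => by simpa using hC σ ω)
  simp only [Real.exp_zero, Finset.sum_const, Finset.card_univ, nsmul_eq_mul, mul_one] at h
  have h2 : |Real.log (∑ σ : Fin N → Bool, Real.exp (H σ ω))|
      ≤ |Real.log (∑ σ : Fin N → Bool, Real.exp (H σ ω))
          - Real.log ((Fintype.card (Fin N → Bool) : ℝ))|
        + |Real.log ((Fintype.card (Fin N → Bool) : ℝ))| := by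
    have := abs_add_le (Real.log (∑ σ : Fin N → Bool, Real.exp (H σ ω))
        - Real.log ((Fintype.card (Fin N → Bool) : ℝ)))
      (Real.log ((Fintype.card (Fin N → Bool) : ℝ)))
    simpa using this
  linarith

lemma triple_abs_sum_le {K N : ℕ} (f g : Fin K → Fin N → Fin N → ℝ)
    (h : ∀ k i j, |f k i j| ≤ g k i j) :
    |∑ k, ∑ i, ∑ j, f k i j| ≤ ∑ k, ∑ i, ∑ j, g k i j := by
  refine le_trans (Finset.abs_sum_le_sum_abs _ _) (Finset.sum_le_sum fun k _ => ?_)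
  refine le_trans (Finset.abs_sum_le_sum_abs _ _) (Finset.sum_le_sum fun i _ => ?_)
  exact le_trans (Finset.abs_sum_le_sum_abs _ _) (Finset.sum_le_sum fun j _ => h k i j)

lemma triple_sum_le_const {K N : ℕ} (g : Fin K → Fin N → Fin N → ℝ) (B : ℝ)
    (h : ∀ k i j, g k i j ≤ B) :
    ∑ k, ∑ i, ∑ j, g k i j ≤ (K : ℝ) * (N : ℝ)^2 * B := by
  calc ∑ k, ∑ i, ∑ j, g k i j ≤ ∑ _k : Fin K, ∑ _i : Fin N, ∑ _j : Fin N, B :=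
      Finset.sum_le_sum fun k _ => Finset.sum_le_sum fun i _ =>
        Finset.sum_le_sum fun j _ => h k i j
    _ = (K:ℝ)*(N:ℝ)^2*B := by
      simp [Finset.sum_const, Finset.card_univ]
      ring

lemma triple_abs_sum_le_const {K N : ℕ} (f : Fin K → Fin N → Fin N → ℝ) (B : ℝ)
    (h : ∀ k i j, |f k i j| ≤ B) :
    |∑ k, ∑ i, ∑ j, f k i j| ≤ (K : ℝ) * (N : ℝ)^2 * B :=
  le_trans (triple_abs_sum_le f (fun _ _ _ => B) h)
    (triple_sum_le_const _ B (fun _ _ _ => le_refl B))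

lemma triple_mul_sub_split {K N : ℕ} (a1 a2 : ℝ) (T1 T2 : Fin K → Fin N → Fin N → ℝ) :
    a1 * (∑ k, ∑ i, ∑ j, T1 k i j) - a2 * (∑ k, ∑ i, ∑ j, T2 k i j)
      = ∑ k, ∑ i, ∑ j, (a1 * T1 k i j - a2 * T2 k i j) := by
  simp only [Finset.mul_sum, Finset.sum_sub_distrib]

end AuxLemmas

set_option maxHeartbeats 2000000 in
/-- in the big-data limit `M → ∞`, the free energy of supervised
Hebbian learning converges to the free energy of the Hopfield model. -/
theorem supervised_free_energy_tendsto_hopfield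
    (N K : ℕ) (hN : 0 < N) (hK : 0 < K)
    (β r : ℝ) (hβ : 0 < β) (hr0 : 0 < r) (hr1 : r ≤ 1)
    {Ω : Type} [MeasurableSpace Ω] (μ : Measure Ω) [IsProbabilityMeasure μ]
    (ξ : Fin N → Fin K → Ω → ℝ) (χ : Fin N → Fin K → ℕ → Ω → ℝ)
    (hmeasξ : ∀ i k, Measurable (ξ i k))
    (hmeasχ : ∀ i k a, Measurable (χ i k a))
    (hrangeξ : ∀ i k ω, ξ i k ω = 1 ∨ ξ i k ω = -1)
    (hrangeχ : ∀ i k a ω, χ i k a ω = 1 ∨ χ i k a ω = -1)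
    (hlawξ : ∀ i k, μ {ω | ξ i k ω = 1} = ENNReal.ofReal (1 / 2)
      ∧ μ {ω | ξ i k ω = -1} = ENNReal.ofReal (1 / 2))
    (hlawχ : ∀ i k a, μ {ω | χ i k a ω = 1} = ENNReal.ofReal ((1 + r) / 2)
      ∧ μ {ω | χ i k a ω = -1} = ENNReal.ofReal ((1 - r) / 2))
    (hindep : iIndepFun (m := fun _ => Real.measurableSpace)
      (Sum.elim (fun q : Fin N × Fin K => ξ q.1 q.2)
        (fun q : Fin N × Fin K × ℕ => χ q.1 q.2.1 q.2.2)) μ)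
    (η : Fin N → Fin K → ℕ → Ω → ℝ)
    (hη : ∀ i k a ω, η i k a ω = χ i k a ω * ξ i k ω)
    (R : ℕ → ℝ) (hR : ∀ M, R M = r ^ 2 + (1 - r ^ 2) / (M : ℝ))
    (ASup : ℕ → ℝ)
    (hASup : ∀ M, ASup M = (1 / (N : ℝ)) * ∫ ω,
      Real.log (∑ σ : Fin N → Bool, Real.exp ((β / ((N : ℝ) * R M)) *
        ∑ k : Fin K, ∑ i : Fin N, ∑ j : Fin N, if i < j then
          ((1 / (M : ℝ)) * ∑ a ∈ Finset.range M, η i k a ω)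
            * ((1 / (M : ℝ)) * ∑ b ∈ Finset.range M, η j k b ω)
            * spin (σ i) * spin (σ j) else 0)) ∂μ)
    (AHop : ℝ)
    (hAHop : AHop = (1 / (N : ℝ)) * ∫ ω,
      Real.log (∑ σ : Fin N → Bool, Real.exp ((β / (N : ℝ)) *
        ∑ k : Fin K, ∑ i : Fin N, ∑ j : Fin N, if i < j then
          ξ i k ω * ξ j k ω * spin (σ i) * spin (σ j) else 0)) ∂μ) :
    Tendsto ASup atTop (nhds AHop) := by
  classical
  have hNR : (0:ℝ) < (N:ℝ) := by exact_mod_cast hN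
  have hNne : (N:ℝ) ≠ 0 := ne_of_gt hNR
  have h1r2 : (0:ℝ) ≤ 1 - r^2 := by nlinarith
  have habs_sub : ∀ x y : ℝ, |x - y| ≤ |x| + |y| := fun x y => by
    rw [sub_eq_add_neg]
    exact le_trans (abs_add_le _ _) (by rw [abs_neg])
  have habsχ : ∀ i k a ω, |χ i k a ω| = 1 := fun i k a ω => by
    rcases hrangeχ i k a ω with h | h <;> simp [h]
  have habsξ : ∀ i k ω, |ξ i k ω| = 1 := fun i k ω => by
    rcases hrangeξ i k ω with h | h <;> simp [h]
  have habsspin : ∀ b, |spin b| = 1 := fun b => by cases b <;> simp [spin]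
  have hmeasη : ∀ i k a, Measurable (η i k a) := by
    intro i k a
    have h : η i k a = fun ω => χ i k a ω * ξ i k ω := funext fun ω => hη i k a ω
    rw [h]; exact (hmeasχ i k a).mul (hmeasξ i k)
  have hintχ : ∀ i k a, Integrable (χ i k a) μ := fun i k a =>
    integrable_of_bound _ 1 (hmeasχ i k a) (fun ω => (habsχ i k a ω).le)
  have hEχ : ∀ i k a, ∫ ω, χ i k a ω ∂μ = r := by
    intro i k a
    rw [integral_pm_one (χ i k a) ((1+r)/2) (by linarith) (hmeasχ i k a)
      (hrangeχ i k a) (hlawχ i k a).1]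
    ring
  have hEχχ : ∀ (i j : Fin N) (k l : Fin K) (a b : ℕ), (i, k, a) ≠ (j, l, b) →
      ∫ ω, χ i k a ω * χ j l b ω ∂μ = r * r := by
    intro i j k l a b hne
    have hne2 : (Sum.inr (i,k,a) : (Fin N × Fin K) ⊕ (Fin N × Fin K × ℕ)) ≠ Sum.inr (j,l,b) := by
      simp [hne]
    have hind2 : IndepFun (χ i k a) (χ j l b) μ := hindep.indepFun hne2
    calc ∫ ω, χ i k a ω * χ j l b ω ∂μ
        = (∫ ω, χ i k a ω ∂μ) * ∫ ω, χ j l b ω ∂μ :=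
          hind2.integral_fun_mul_eq_mul_integral (hintχ i k a).aestronglyMeasurable
            (hintχ j l b).aestronglyMeasurable
      _ = r * r := by rw [hEχ, hEχ]
  -- cross moments
  have hintcross : ∀ (i : Fin N) (k : Fin K) (a b : ℕ),
      Integrable (fun ω => (χ i k a ω - r) * (χ i k b ω - r)) μ := by
    intro i k a b
    refine integrable_of_bound _ 4 (((hmeasχ i k a).sub measurable_const).mul
      ((hmeasχ i k b).sub measurable_const)) (fun ω => ?_)
    rw [abs_mul]
    have h1 : |χ i k a ω - r| ≤ 2 :=
      le_trans (habs_sub _ _) (by rw [habsχ, abs_of_pos hr0]; linarith)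
    have h2 : |χ i k b ω - r| ≤ 2 :=
      le_trans (habs_sub _ _) (by rw [habsχ, abs_of_pos hr0]; linarith)
    nlinarith [abs_nonneg (χ i k a ω - r), abs_nonneg (χ i k b ω - r)]
  have hcross : ∀ (i : Fin N) (k : Fin K) (a b : ℕ),
      ∫ ω, (χ i k a ω - r) * (χ i k b ω - r) ∂μ = if a = b then 1 - r^2 else 0 := by
    intro i k a b
    have hEab : ∫ ω, χ i k a ω * χ i k b ω ∂μ = if a = b then 1 else r * r := by
      by_cases hab : a = b
      · subst hab
        rw [if_pos rfl]
        have h1 : (fun ω => χ i k a ω * χ i k a ω) = fun _ => (1:ℝ) :=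
          funext fun ω => by rcases hrangeχ i k a ω with h | h <;> rw [h] <;> norm_num
        rw [h1, integral_const]; simp
      · rw [if_neg hab]
        exact hEχχ i i k k a b (by simp [hab])
    have hintab : Integrable (fun ω => χ i k a ω * χ i k b ω) μ :=
      integrable_of_bound _ 1 ((hmeasχ i k a).mul (hmeasχ i k b))
        (fun ω => by rw [abs_mul, habsχ, habsχ]; norm_num)
    have hrepr : (fun ω => (χ i k a ω - r) * (χ i k b ω - r))
        = fun ω => (χ i k a ω * χ i k b ω - r * χ i k a ω - r * χ i k b ω) + r^2 := by
      funext ω; ring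
    have hi1 : Integrable (fun ω => χ i k a ω * χ i k b ω - r * χ i k a ω) μ :=
      hintab.sub ((hintχ i k a).const_mul r)
    have hi2 : Integrable
        (fun ω => χ i k a ω * χ i k b ω - r * χ i k a ω - r * χ i k b ω) μ :=
      hi1.sub ((hintχ i k b).const_mul r)
    rw [hrepr, integral_add hi2 (integrable_const _), integral_sub hi1
      ((hintχ i k b).const_mul r), integral_sub hintab ((hintχ i k a).const_mul r),
      MeasureTheory.integral_const_mul, MeasureTheory.integral_const_mul, integral_const,
      hEχ, hEχ, hEab]
    by_cases hab : a = b
    · rw [if_pos hab, if_pos hab]; simp; ring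
    · rw [if_neg hab, if_neg hab]; simp; ring
  -- variance of empirical mean
  have hvar : ∀ (M : ℕ), 1 ≤ M → ∀ (i : Fin N) (k : Fin K),
      ∫ ω, ((1/(M:ℝ)) * (∑ a ∈ Finset.range M, χ i k a ω) - r)^2 ∂μ = (1 - r^2)/(M:ℝ) := by
    intro M hM i k
    have hM0 : (M:ℝ) ≠ 0 := Nat.cast_ne_zero.2 (by omega)
    have hrepr : (fun ω => ((1/(M:ℝ)) * (∑ a ∈ Finset.range M, χ i k a ω) - r)^2)
        = fun ω => (1/(M:ℝ))^2 * ∑ a ∈ Finset.range M, ∑ b ∈ Finset.range M,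
            (χ i k a ω - r) * (χ i k b ω - r) := by
      funext ω
      rw [← Finset.sum_mul_sum]
      have h1 : (1/(M:ℝ)) * (∑ a ∈ Finset.range M, χ i k a ω) - r
          = (1/(M:ℝ)) * (∑ a ∈ Finset.range M, (χ i k a ω - r)) := by
        rw [Finset.sum_sub_distrib, Finset.sum_const, Finset.card_range, nsmul_eq_mul]
        field_simp
      rw [h1]; ring
    rw [hrepr, MeasureTheory.integral_const_mul,
      integral_finset_sum _ (fun a _ => integrable_finset_sum _ (fun b _ => hintcross i k a b))]
    have h2 : ∀ a ∈ Finset.range M,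
        ∫ ω, ∑ b ∈ Finset.range M, (χ i k a ω - r) * (χ i k b ω - r) ∂μ
          = ∑ b ∈ Finset.range M, if a = b then 1 - r^2 else 0 := by
      intro a _
      rw [integral_finset_sum _ (fun b _ => hintcross i k a b)]
      exact Finset.sum_congr rfl fun b _ => hcross i k a b
    rw [Finset.sum_congr rfl h2]
    have h3 : ∀ a ∈ Finset.range M,
        (∑ b ∈ Finset.range M, if a = b then 1 - r^2 else 0) = 1 - r^2 := by
      intro a ha
      rw [Finset.sum_ite_eq (Finset.range M) a (fun _ => 1 - r^2), if_pos ha]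
    rw [Finset.sum_congr rfl h3, Finset.sum_const, Finset.card_range]
    field_simp
    ring
  -- measurability and bounds for empirical means
  have hmeasc : ∀ (M : ℕ) (i : Fin N) (k : Fin K),
      Measurable (fun ω => (1/(M:ℝ)) * (∑ a ∈ Finset.range M, χ i k a ω)) := by
    intro M i k
    exact (Finset.measurable_sum _ fun a _ => hmeasχ i k a).const_mul _
  have habsc : ∀ (M : ℕ) (i : Fin N) (k : Fin K) (ω : Ω),
      |(1/(M:ℝ)) * ∑ a ∈ Finset.range M, χ i k a ω| ≤ 1 := by
    intro M i k ω
    rw [abs_mul, abs_of_nonneg (by positivity : (0:ℝ) ≤ 1/(M:ℝ))]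
    have h1 : |∑ a ∈ Finset.range M, χ i k a ω| ≤ (M:ℝ) := by
      refine le_trans (Finset.abs_sum_le_sum_abs _ _) ?_
      calc ∑ a ∈ Finset.range M, |χ i k a ω| = ∑ _a ∈ Finset.range M, (1:ℝ) :=
            Finset.sum_congr rfl fun a _ => habsχ i k a ω
        _ = (M:ℝ) := by simp
        _ ≤ (M:ℝ) := le_refl _
    rcases Nat.eq_zero_or_pos M with h | h
    · subst h; simp
    · have hM0 : (0:ℝ) < (M:ℝ) := by exact_mod_cast h
      calc 1/(M:ℝ) * |∑ a ∈ Finset.range M, χ i k a ω| ≤ 1/(M:ℝ) * (M:ℝ) :=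
            mul_le_mul_of_nonneg_left h1 (by positivity)
        _ = 1 := by rw [one_div, inv_mul_cancel₀ (ne_of_gt hM0)]
  have habscr : ∀ (M : ℕ) (i : Fin N) (k : Fin K) (ω : Ω),
      |(1/(M:ℝ)) * (∑ a ∈ Finset.range M, χ i k a ω) - r| ≤ 2 := by
    intro M i k ω
    refine le_trans (habs_sub _ _) ?_
    have := habsc M i k ω
    rw [abs_of_pos hr0]
    linarith
  have hexp1 : ∀ (M : ℕ), 1 ≤ M → ∀ (i : Fin N) (k : Fin K),
      ∫ ω, |(1/(M:ℝ)) * (∑ a ∈ Finset.range M, χ i k a ω) - r| ∂μ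
        ≤ Real.sqrt ((1 - r^2)/(M:ℝ)) := by
    intro M hM i k
    have hmeas1 : Measurable (fun ω => (1/(M:ℝ)) * (∑ a ∈ Finset.range M, χ i k a ω) - r) :=
      (hmeasc M i k).sub measurable_const
    have hint1 : Integrable (fun ω => (1/(M:ℝ)) * (∑ a ∈ Finset.range M, χ i k a ω) - r) μ :=
      integrable_of_bound _ 2 hmeas1 (habscr M i k)
    have hint2 : Integrable
        (fun ω => ((1/(M:ℝ)) * (∑ a ∈ Finset.range M, χ i k a ω) - r)^2) μ := by
      refine integrable_of_bound _ 4 (hmeas1.pow_const 2) (fun ω => ?_)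
      rw [abs_of_nonneg (sq_nonneg _), ← sq_abs]
      nlinarith [habscr M i k ω, abs_nonneg ((1/(M:ℝ)) * (∑ a ∈ Finset.range M, χ i k a ω) - r)]
    refine Real.le_sqrt_of_sq_le ?_
    rw [← hvar M hM i k]
    exact sq_integral_abs_le μ _ hint1 hint2
  -- the quantitative bound
  set b : ℕ → ℝ := fun M => (1/(N:ℝ)) * ((K:ℝ)*(N:ℝ)^2 *
      ((β/((N:ℝ)*r^2)) * (2*Real.sqrt ((1-r^2)/(M:ℝ)) + (1-r^2)/(M:ℝ)))) with hbdef
  have hmain : ∀ M : ℕ, 1 ≤ M → |ASup M - AHop| ≤ b M := by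
    intro M hM
    have hA := hASup M
    have hB := hAHop
    have hM0 : (M:ℝ) ≠ 0 := Nat.cast_ne_zero.2 (by omega)
    have hMpos : (0:ℝ) < (M:ℝ) := by exact_mod_cast hM
    have hv0 : (0:ℝ) ≤ (1-r^2)/(M:ℝ) := div_nonneg h1r2 hMpos.le
    have hv1 : (1-r^2)/(M:ℝ) ≤ 1 :=
      le_trans (div_le_self h1r2 (by exact_mod_cast hM)) (by nlinarith)
    have hRM : R M = r^2 + (1-r^2)/(M:ℝ) := hR M
    have hRMr : r^2 ≤ R M := by rw [hRM]; linarith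
    have hRpos : 0 < R M := lt_of_lt_of_le (by positivity) hRMr
    have hRne : R M ≠ 0 := ne_of_gt hRpos
    set a1 : ℝ := β / ((N:ℝ) * R M) with ha1
    have ha1nn : 0 ≤ a1 := by rw [ha1]; positivity
    have ha2 : β/(N:ℝ) = a1 * R M := by rw [ha1]; field_simp
    have ha1le : a1 ≤ β/((N:ℝ)*r^2) := by
      rw [ha1]
      exact div_le_div_of_nonneg_left hβ.le (by positivity)
        (mul_le_mul_of_nonneg_left hRMr hNR.le)
    -- the key per-term inequality
    have key : ∀ x y s t ci cj : ℝ, |x| = 1 → |y| = 1 → |s| = 1 → |t| = 1 →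
        |ci| ≤ 1 →
        |a1 * (x * ci * (y * cj) * s * t) - β/(N:ℝ) * (x * y * s * t)|
          ≤ a1 * (|ci - r| + |cj - r| + (1-r^2)/(M:ℝ)) := by
      intro x y s t ci cj hx hy hs ht hci
      have habs4 : |x * y * s * t| = 1 := by
        rw [abs_mul, abs_mul, abs_mul, hx, hy, hs, ht]; norm_num
      have h1 : a1 * (x * ci * (y * cj) * s * t) - β/(N:ℝ) * (x * y * s * t)
          = a1 * ((x * y * s * t) * (ci * cj - R M)) := by rw [ha2]; ring
      rw [h1, abs_mul, abs_mul, habs4, abs_of_nonneg ha1nn, one_mul]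
      have hcc : |ci * cj - R M| ≤ |ci - r| + |cj - r| + (1-r^2)/(M:ℝ) := by
        have e : ci * cj - R M = ci * (cj - r) + r * (ci - r) + -((1-r^2)/(M:ℝ)) := by
          rw [hRM]; ring
        calc |ci * cj - R M| ≤ |ci * (cj - r) + r * (ci - r)| + |-((1-r^2)/(M:ℝ))| := by
              rw [e]; exact abs_add_le _ _
          _ ≤ |ci * (cj - r)| + |r * (ci - r)| + (1-r^2)/(M:ℝ) := by
              rw [abs_neg, abs_of_nonneg hv0]
              exact add_le_add (abs_add_le _ _) le_rfl
          _ ≤ |ci - r| + |cj - r| + (1-r^2)/(M:ℝ) := by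
              rw [abs_mul, abs_mul, abs_of_pos hr0]
              have h2 : |ci| * |cj - r| ≤ 1 * |cj - r| :=
                mul_le_mul_of_nonneg_right hci (abs_nonneg _)
              have h3 : r * |ci - r| ≤ 1 * |ci - r| :=
                mul_le_mul_of_nonneg_right hr1 (abs_nonneg _)
              linarith
      exact mul_le_mul_of_nonneg_left hcc ha1nn
    have keyb : ∀ x y s t ci cj : ℝ, |x| = 1 → |y| = 1 → |s| = 1 → |t| = 1 →
        |ci| ≤ 1 → |cj| ≤ 1 → |x * ci * (y * cj) * s * t| ≤ 1 := by
      intro x y s t ci cj hx hy hs ht hci hcj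
      simp only [abs_mul]
      rw [hx, hy, hs, ht]
      nlinarith [abs_nonneg ci, abs_nonneg cj]
    have hm_eq : ∀ (i : Fin N) (k : Fin K) (ω : Ω),
        (1/(M:ℝ)) * ∑ a ∈ Finset.range M, η i k a ω
          = ξ i k ω * ((1/(M:ℝ)) * (∑ a ∈ Finset.range M, χ i k a ω)) := by
      intro i k ω
      have h1 : ∑ a ∈ Finset.range M, η i k a ω
          = (∑ a ∈ Finset.range M, χ i k a ω) * ξ i k ω :=
        calc ∑ a ∈ Finset.range M, η i k a ω
            = ∑ a ∈ Finset.range M, χ i k a ω * ξ i k ω :=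
              Finset.sum_congr rfl fun a _ => hη i k a ω
          _ = (∑ a ∈ Finset.range M, χ i k a ω) * ξ i k ω := (Finset.sum_mul _ _ _).symm
      rw [h1]; ring
    set D : Ω → ℝ := fun ω => ∑ k : Fin K, ∑ i : Fin N, ∑ j : Fin N,
        if i < j then a1 * (|(1/(M:ℝ)) * (∑ a ∈ Finset.range M, χ i k a ω) - r|
          + |(1/(M:ℝ)) * (∑ a ∈ Finset.range M, χ j k a ω) - r| + (1-r^2)/(M:ℝ))
        else 0 with hD
    have hHdiff : ∀ (σ : Fin N → Bool) (ω : Ω),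
        |a1 * (∑ k : Fin K, ∑ i : Fin N, ∑ j : Fin N, if i < j then
            ((1 / (M : ℝ)) * ∑ a ∈ Finset.range M, η i k a ω)
              * ((1 / (M : ℝ)) * ∑ b ∈ Finset.range M, η j k b ω)
              * spin (σ i) * spin (σ j) else 0)
          - (β / (N:ℝ)) * (∑ k : Fin K, ∑ i : Fin N, ∑ j : Fin N, if i < j then
            ξ i k ω * ξ j k ω * spin (σ i) * spin (σ j) else 0)| ≤ D ω := by
      intro σ ω
      rw [triple_mul_sub_split]
      simp only [hD]
      refine triple_abs_sum_le _ _ (fun k i j => ?_)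
      by_cases hij : i < j
      · simp only [if_pos hij]
        rw [hm_eq i k ω, hm_eq j k ω]
        exact key _ _ _ _ _ _ (habsξ i k ω) (habsξ j k ω) (habsspin (σ i))
          (habsspin (σ j)) (habsc M i k ω)
      · simp only [if_neg hij]; simp
    -- the two free-energy integrands
    set FM : Ω → ℝ := fun ω => Real.log (∑ σ : Fin N → Bool, Real.exp (a1 *
        ∑ k : Fin K, ∑ i : Fin N, ∑ j : Fin N, if i < j then
          ((1 / (M : ℝ)) * ∑ a ∈ Finset.range M, η i k a ω)
            * ((1 / (M : ℝ)) * ∑ b ∈ Finset.range M, η j k b ω)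
            * spin (σ i) * spin (σ j) else 0)) with hFM
    set F : Ω → ℝ := fun ω => Real.log (∑ σ : Fin N → Bool, Real.exp ((β / (N : ℝ)) *
        ∑ k : Fin K, ∑ i : Fin N, ∑ j : Fin N, if i < j then
          ξ i k ω * ξ j k ω * spin (σ i) * spin (σ j) else 0)) with hF
    -- measurability of the Hamiltonians
    have hmeasHM : ∀ σ : Fin N → Bool, Measurable (fun ω => a1 *
        ∑ k : Fin K, ∑ i : Fin N, ∑ j : Fin N, if i < j then
          ((1 / (M : ℝ)) * ∑ a ∈ Finset.range M, η i k a ω)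
            * ((1 / (M : ℝ)) * ∑ b ∈ Finset.range M, η j k b ω)
            * spin (σ i) * spin (σ j) else 0) := by
      intro σ
      refine Measurable.const_mul ?_ a1
      refine Finset.measurable_sum _ fun k _ => ?_
      refine Finset.measurable_sum _ fun i _ => ?_
      refine Finset.measurable_sum _ fun j _ => ?_
      by_cases hij : i < j
      · simp only [if_pos hij]
        exact ((((Finset.measurable_sum _ fun a _ => hmeasη i k a).const_mul _).mul
          ((Finset.measurable_sum _ fun b _ => hmeasη j k b).const_mul _)).mul
          measurable_const).mul measurable_const
      · simp only [if_neg hij]; exact measurable_const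
    have hmeasHH : ∀ σ : Fin N → Bool, Measurable (fun ω => (β / (N : ℝ)) *
        ∑ k : Fin K, ∑ i : Fin N, ∑ j : Fin N, if i < j then
          ξ i k ω * ξ j k ω * spin (σ i) * spin (σ j) else 0) := by
      intro σ
      refine Measurable.const_mul ?_ _
      refine Finset.measurable_sum _ fun k _ => ?_
      refine Finset.measurable_sum _ fun i _ => ?_
      refine Finset.measurable_sum _ fun j _ => ?_
      by_cases hij : i < j
      · simp only [if_pos hij]
        exact (((hmeasξ i k).mul (hmeasξ j k)).mul measurable_const).mul measurable_const
      · simp only [if_neg hij]; exact measurable_const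
    -- bounds on the Hamiltonians
    have hHMb : ∀ (σ : Fin N → Bool) (ω : Ω), |a1 *
        ∑ k : Fin K, ∑ i : Fin N, ∑ j : Fin N, (if i < j then
          ((1 / (M : ℝ)) * ∑ a ∈ Finset.range M, η i k a ω)
            * ((1 / (M : ℝ)) * ∑ b ∈ Finset.range M, η j k b ω)
            * spin (σ i) * spin (σ j) else 0)| ≤ a1 * ((K:ℝ)*(N:ℝ)^2) := by
      intro σ ω
      rw [abs_mul, abs_of_nonneg ha1nn]
      have h1 : |∑ k : Fin K, ∑ i : Fin N, ∑ j : Fin N, (if i < j then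
          ((1 / (M : ℝ)) * ∑ a ∈ Finset.range M, η i k a ω)
            * ((1 / (M : ℝ)) * ∑ b ∈ Finset.range M, η j k b ω)
            * spin (σ i) * spin (σ j) else 0)| ≤ (K:ℝ)*(N:ℝ)^2*1 := by
        refine triple_abs_sum_le_const _ 1 (fun k i j => ?_)
        by_cases hij : i < j
        · simp only [if_pos hij]
          rw [hm_eq i k ω, hm_eq j k ω]
          exact keyb _ _ _ _ _ _ (habsξ i k ω) (habsξ j k ω) (habsspin (σ i))
            (habsspin (σ j)) (habsc M i k ω) (habsc M j k ω)
        · simp only [if_neg hij]; simp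
      calc a1 * |∑ k : Fin K, ∑ i : Fin N, ∑ j : Fin N, (if i < j then
          ((1 / (M : ℝ)) * ∑ a ∈ Finset.range M, η i k a ω)
            * ((1 / (M : ℝ)) * ∑ b ∈ Finset.range M, η j k b ω)
            * spin (σ i) * spin (σ j) else 0)| ≤ a1 * ((K:ℝ)*(N:ℝ)^2*1) :=
            mul_le_mul_of_nonneg_left h1 ha1nn
        _ = a1 * ((K:ℝ)*(N:ℝ)^2) := by ring
    have hHHb : ∀ (σ : Fin N → Bool) (ω : Ω), |(β / (N:ℝ)) *
        ∑ k : Fin K, ∑ i : Fin N, ∑ j : Fin N, (if i < j then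
          ξ i k ω * ξ j k ω * spin (σ i) * spin (σ j) else 0)|
          ≤ (β/(N:ℝ)) * ((K:ℝ)*(N:ℝ)^2) := by
      intro σ ω
      rw [abs_mul, abs_of_nonneg (by positivity : (0:ℝ) ≤ β/(N:ℝ))]
      have h1 : |∑ k : Fin K, ∑ i : Fin N, ∑ j : Fin N, (if i < j then
          ξ i k ω * ξ j k ω * spin (σ i) * spin (σ j) else 0)| ≤ (K:ℝ)*(N:ℝ)^2*1 := by
        refine triple_abs_sum_le_const _ 1 (fun k i j => ?_)
        by_cases hij : i < j
        · simp only [if_pos hij]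
          simp only [abs_mul]
          rw [habsξ, habsξ, habsspin, habsspin]
          norm_num
        · simp only [if_neg hij]; simp
      calc (β/(N:ℝ)) * |∑ k : Fin K, ∑ i : Fin N, ∑ j : Fin N, (if i < j then
          ξ i k ω * ξ j k ω * spin (σ i) * spin (σ j) else 0)|
            ≤ (β/(N:ℝ)) * ((K:ℝ)*(N:ℝ)^2*1) :=
            mul_le_mul_of_nonneg_left h1 (by positivity)
        _ = (β/(N:ℝ)) * ((K:ℝ)*(N:ℝ)^2) := by ring
    -- integrability of the integrands
    have hintFM : Integrable FM μ := by
      refine integrable_of_bound FM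
        (|Real.log ((Fintype.card (Fin N → Bool) : ℝ))| + a1 * ((K:ℝ)*(N:ℝ)^2)) ?_ ?_
      · rw [hFM]; exact logZ_meas _ hmeasHM
      · intro ω
        rw [hFM]
        exact logZ_bound _ _ hHMb ω
    have hintF : Integrable F μ := by
      refine integrable_of_bound F
        (|Real.log ((Fintype.card (Fin N → Bool) : ℝ))| + (β/(N:ℝ)) * ((K:ℝ)*(N:ℝ)^2)) ?_ ?_
      · rw [hF]; exact logZ_meas _ hmeasHH
      · intro ω
        rw [hF]
        exact logZ_bound _ _ hHHb ω
    -- pointwise bound on the integrand difference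
    have hFMF : ∀ ω, |FM ω - F ω| ≤ D ω := by
      intro ω
      rw [hFM, hF]
      exact lse_lipschitz _ _ (D ω) (fun σ => hHdiff σ ω)
    -- integrability of D and bound on its integral
    have hmeasX : ∀ (i : Fin N) (k : Fin K),
        Measurable (fun ω => |(1/(M:ℝ)) * (∑ a ∈ Finset.range M, χ i k a ω) - r|) :=
      fun i k => ((hmeasc M i k).sub measurable_const).abs
    have hintX : ∀ (i : Fin N) (k : Fin K),
        Integrable (fun ω => |(1/(M:ℝ)) * (∑ a ∈ Finset.range M, χ i k a ω) - r|) μ :=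
      fun i k => integrable_of_bound _ 2 (hmeasX i k)
        (fun ω => by rw [abs_abs]; exact habscr M i k ω)
    have hterm_int : ∀ (k : Fin K) (i j : Fin N), Integrable (fun ω => if i < j then
        a1 * (|(1/(M:ℝ)) * (∑ a ∈ Finset.range M, χ i k a ω) - r|
          + |(1/(M:ℝ)) * (∑ a ∈ Finset.range M, χ j k a ω) - r| + (1-r^2)/(M:ℝ))
        else 0) μ := by
      intro k i j
      by_cases hij : i < j
      · simp only [if_pos hij]
        exact (((hintX i k).add (hintX j k)).add (integrable_const _)).const_mul a1
      · simp only [if_neg hij]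
        exact integrable_const 0
    have hterm_le : ∀ (k : Fin K) (i j : Fin N),
        (∫ ω, (if i < j then
          a1 * (|(1/(M:ℝ)) * (∑ a ∈ Finset.range M, χ i k a ω) - r|
            + |(1/(M:ℝ)) * (∑ a ∈ Finset.range M, χ j k a ω) - r| + (1-r^2)/(M:ℝ))
          else 0) ∂μ)
          ≤ a1 * (2*Real.sqrt ((1-r^2)/(M:ℝ)) + (1-r^2)/(M:ℝ)) := by
      intro k i j
      have hgoal0 : 0 ≤ a1 * (2*Real.sqrt ((1-r^2)/(M:ℝ)) + (1-r^2)/(M:ℝ)) :=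
        mul_nonneg ha1nn (add_nonneg (mul_nonneg (by norm_num) (Real.sqrt_nonneg _)) hv0)
      by_cases hij : i < j
      · simp only [if_pos hij]
        rw [MeasureTheory.integral_const_mul]
        refine mul_le_mul_of_nonneg_left ?_ ha1nn
        have hXY : Integrable (fun ω => |(1/(M:ℝ)) * (∑ a ∈ Finset.range M, χ i k a ω) - r|
            + |(1/(M:ℝ)) * (∑ a ∈ Finset.range M, χ j k a ω) - r|) μ :=
          (hintX i k).add (hintX j k)
        rw [integral_add hXY (integrable_const _), integral_add (hintX i k) (hintX j k),
          integral_const]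
        have e1 := hexp1 M hM i k
        have e2 := hexp1 M hM j k
        simp only [measure_univ, ENNReal.toReal_one, probReal_univ, smul_eq_mul, one_mul]
        linarith
      · simp only [if_neg hij]
        simpa using hgoal0
    have hintD : Integrable D μ := by
      rw [hD]
      exact integrable_finset_sum _ (fun k _ => integrable_finset_sum _
        (fun i _ => integrable_finset_sum _ (fun j _ => hterm_int k i j)))
    have hintD_le : ∫ ω, D ω ∂μ ≤ (K:ℝ)*(N:ℝ)^2
        * (a1 * (2*Real.sqrt ((1-r^2)/(M:ℝ)) + (1-r^2)/(M:ℝ))) := by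
      simp only [hD]
      rw [integral_finset_sum _ (fun k _ => integrable_finset_sum _
        (fun i _ => integrable_finset_sum _ (fun j _ => hterm_int k i j)))]
      have hswap : ∀ k ∈ (Finset.univ : Finset (Fin K)),
          (∫ ω, ∑ i : Fin N, ∑ j : Fin N, (if i < j then
            a1 * (|(1/(M:ℝ)) * (∑ a ∈ Finset.range M, χ i k a ω) - r|
              + |(1/(M:ℝ)) * (∑ a ∈ Finset.range M, χ j k a ω) - r| + (1-r^2)/(M:ℝ))
            else 0) ∂μ)
          = ∑ i : Fin N, ∑ j : Fin N, ∫ ω, (if i < j then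
            a1 * (|(1/(M:ℝ)) * (∑ a ∈ Finset.range M, χ i k a ω) - r|
              + |(1/(M:ℝ)) * (∑ a ∈ Finset.range M, χ j k a ω) - r| + (1-r^2)/(M:ℝ))
            else 0) ∂μ := by
        intro k _
        rw [integral_finset_sum _ (fun i _ => integrable_finset_sum _
          (fun j _ => hterm_int k i j))]
        exact Finset.sum_congr rfl fun i _ =>
          integral_finset_sum _ (fun j _ => hterm_int k i j)
      rw [Finset.sum_congr rfl hswap]
      exact triple_sum_le_const _ _ (fun k i j => hterm_le k i j)
    -- assembling
    rw [hA, hB, ← mul_sub, abs_mul, abs_of_nonneg (by positivity : (0:ℝ) ≤ 1/(N:ℝ))]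
    have h1 : |(∫ ω, FM ω ∂μ) - ∫ ω, F ω ∂μ| ≤ ∫ ω, D ω ∂μ := by
      rw [← integral_sub hintFM hintF]
      have h2 : |∫ ω, (FM ω - F ω) ∂μ| ≤ ∫ ω, |FM ω - F ω| ∂μ := by
        simpa [Real.norm_eq_abs] using
          norm_integral_le_integral_norm (μ := μ) (fun ω => FM ω - F ω)
      exact le_trans h2 (integral_mono ((hintFM.sub hintF).abs) hintD (fun ω => hFMF ω))
    have hB0nn : 0 ≤ 2*Real.sqrt ((1-r^2)/(M:ℝ)) + (1-r^2)/(M:ℝ) :=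
      add_nonneg (mul_nonneg (by norm_num) (Real.sqrt_nonneg _)) hv0
    calc (1/(N:ℝ)) * |(∫ ω, FM ω ∂μ) - ∫ ω, F ω ∂μ|
        ≤ (1/(N:ℝ)) * ((K:ℝ)*(N:ℝ)^2
            * (a1 * (2*Real.sqrt ((1-r^2)/(M:ℝ)) + (1-r^2)/(M:ℝ)))) :=
          mul_le_mul_of_nonneg_left (le_trans h1 hintD_le) (by positivity)
      _ ≤ (1/(N:ℝ)) * ((K:ℝ)*(N:ℝ)^2
            * ((β/((N:ℝ)*r^2)) * (2*Real.sqrt ((1-r^2)/(M:ℝ)) + (1-r^2)/(M:ℝ)))) := by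
          refine mul_le_mul_of_nonneg_left (mul_le_mul_of_nonneg_left
            (mul_le_mul_of_nonneg_right ha1le hB0nn) (by positivity)) (by positivity)
      _ = b M := by rw [hbdef]
  -- conclusion by squeezing
  have hV : Tendsto (fun M : ℕ => (1-r^2)/(M:ℝ)) atTop (nhds 0) :=
    tendsto_const_div_atTop_nhds_zero_nat _
  have hsq : Tendsto (fun M : ℕ => Real.sqrt ((1-r^2)/(M:ℝ))) atTop (nhds 0) := by
    have h := (Real.continuous_sqrt.tendsto 0).comp hV
    rw [show Real.sqrt 0 = 0 from Real.sqrt_zero] at h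
    exact h
  have hb0 : Tendsto b atTop (nhds 0) := by
    have h2 : Tendsto (fun M : ℕ => 2*Real.sqrt ((1-r^2)/(M:ℝ)) + (1-r^2)/(M:ℝ))
        atTop (nhds 0) := by
      have := (hsq.const_mul 2).add hV
      simpa using this
    have h3 := ((h2.const_mul (β/((N:ℝ)*r^2))).const_mul ((K:ℝ)*(N:ℝ)^2)).const_mul (1/(N:ℝ))
    simpa [hbdef] using h3
  have hfinal : Tendsto (fun M => ASup M - AHop) atTop (nhds 0) := by
    refine squeeze_zero_norm' ?_ hb0
    filter_upwards [Filter.eventually_ge_atTop 1] with M hM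
    simpa [Real.norm_eq_abs] using hmain M hM
  exact tendsto_sub_nhds_zero_iff.mp hfinal
end

section
/- Fix positive integers N, K, β > 0 and r ∈ (0,1], with the random patterns ξ and examples η^{μ,a} as in the context. For each M ≥ 1 define the unsupervised free energy A_{N,M} = (1/N)·E[ log ∑_{σ∈{−1,+1}^N} exp( (β/(N·R_M·M))·∑_{μ=1}^K ∑_{a=1}^M ∑_{1≤i<j≤N} η_i^{μ,a}·η_j^{μ,a}·σ_i σ_j ) ] and the Hopfield free energy A_N = (1/N)·E[ log ∑_{σ∈{−1,+1}^N} exp( (β/N)·∑_{μ=1}^K ∑_{1≤i<j≤N} ξ_i^μ ξ_j^μ σ_i σ_j ) ]. Then lim_{M→∞} A_{N,M} = A_N. -/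
open Finset MeasureTheory ProbabilityTheory Filter
set_option maxHeartbeats 1600000

lemma abs_sum_le_card' {ι : Type*} (s : Finset ι) (f : ι → ℝ) (c : ℝ)
    (h : ∀ i ∈ s, |f i| ≤ c) : |∑ i ∈ s, f i| ≤ s.card * c := by
  calc |∑ i ∈ s, f i| ≤ ∑ i ∈ s, |f i| := Finset.abs_sum_le_sum_abs _ _
    _ ≤ ∑ _i ∈ s, c := Finset.sum_le_sum h
    _ = s.card * c := by rw [Finset.sum_const, nsmul_eq_mul]

lemma logsumexp_lip {α : Type*} [Fintype α] [Nonempty α] (f g : α → ℝ) (c : ℝ)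
    (h : ∀ x, |f x - g x| ≤ c) :
    |Real.log (∑ x, Real.exp (f x)) - Real.log (∑ x, Real.exp (g x))| ≤ c := by
  have pos : ∀ (u : α → ℝ), 0 < ∑ x, Real.exp (u x) := fun u =>
    Finset.sum_pos (fun x _ => Real.exp_pos _) Finset.univ_nonempty
  have key : ∀ (u v : α → ℝ), (∀ x, u x ≤ v x + c) →
      Real.log (∑ x, Real.exp (u x)) - Real.log (∑ x, Real.exp (v x)) ≤ c := by
    intro u v huv
    have : ∑ x, Real.exp (u x) ≤ Real.exp c * ∑ x, Real.exp (v x) := by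
      rw [Finset.mul_sum]
      refine Finset.sum_le_sum fun x _ => ?_
      rw [← Real.exp_add]
      exact Real.exp_le_exp.2 (by linarith [huv x])
    have h2 := Real.log_le_log (pos u) this
    rw [Real.log_mul (Real.exp_ne_zero c) (ne_of_gt (pos v)), Real.log_exp] at h2
    linarith
  rw [abs_sub_le_iff]
  exact ⟨key f g fun x => by linarith [(abs_le.1 (h x)).2],
    key g f fun x => by linarith [(abs_le.1 (h x)).1]⟩

lemma abs_logsumexp_le {α : Type*} [Fintype α] [Nonempty α] (f : α → ℝ) (B : ℝ)
    (h : ∀ x, |f x| ≤ B) :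
    |Real.log (∑ x, Real.exp (f x))| ≤ |Real.log (Fintype.card α)| + B := by
  have h2 := logsumexp_lip f (fun _ => 0) B (by simpa using h)
  have h3 : Real.log (∑ _x : α, Real.exp 0) = Real.log (Fintype.card α) := by simp
  rw [h3] at h2
  have h4 := abs_add_le (Real.log (∑ x, Real.exp (f x)) - Real.log (Fintype.card α))
    (Real.log (Fintype.card α))
  rw [sub_add_cancel] at h4
  linarith

lemma integrable_of_bdd {Ω : Type*} [MeasurableSpace Ω] {μ : Measure Ω} [IsFiniteMeasure μ]
    {f : Ω → ℝ} {C : ℝ} (hm : Measurable f) (hb : ∀ ω, |f ω| ≤ C) : Integrable f μ :=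
  ⟨hm.aestronglyMeasurable, HasFiniteIntegral.of_bounded (C := C)
    (ae_of_all _ fun ω => by simpa [Real.norm_eq_abs] using hb ω)⟩

lemma abs_mul4_le_one {a b c d : ℝ} (ha : |a| ≤ 1) (hb : |b| ≤ 1) (hc : |c| ≤ 1)
    (hd : |d| ≤ 1) : |a * b * c * d| ≤ 1 := by
  have h0a := abs_nonneg a; have h0b := abs_nonneg b
  have h0c := abs_nonneg c; have h0d := abs_nonneg d
  rw [abs_mul, abs_mul, abs_mul]
  calc |a| * |b| * |c| * |d| ≤ 1 * 1 * 1 * 1 := by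
        gcongr <;> positivity
    _ = 1 := by norm_num
/-- squeeze from a second-moment style bound. -/
lemma tendsto_zero_of_eps_bound (u : ℕ → ℝ) (h0 : ∀ M, 0 ≤ u M)
    (h : ∀ ε : ℝ, 0 < ε → ∀ M : ℕ, 1 ≤ M → u M ≤ (1 / M + ε ^ 2) / (2 * ε)) :
    Tendsto u atTop (nhds 0) := by
  rw [Metric.tendsto_atTop]
  intro ε hε
  obtain ⟨M₀, hM₀⟩ := exists_nat_gt (4 / ε ^ 2)
  refine ⟨max 1 M₀, fun n hn => ?_⟩
  have hn1 : 1 ≤ n := le_trans (le_max_left _ _) hn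
  have hnM : (M₀ : ℝ) ≤ n := Nat.cast_le.2 (le_trans (le_max_right _ _) hn)
  have hnpos : (0 : ℝ) < n := by positivity
  have h4 : 4 / ε ^ 2 < (n : ℝ) := lt_of_lt_of_le hM₀ hnM
  have hinv : 1 / (n : ℝ) ≤ ε ^ 2 / 4 := by
    rw [div_le_div_iff₀ hnpos (by norm_num)]
    have : 4 / ε ^ 2 * ε ^ 2 < (n : ℝ) * ε ^ 2 := by
      exact mul_lt_mul_of_pos_right h4 (by positivity)
    rw [div_mul_cancel₀] at this
    · linarith
    · positivity
  have hb := h (ε / 2) (by positivity) n hn1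
  have : u n ≤ (ε ^ 2 / 4 + (ε / 2) ^ 2) / (2 * (ε / 2)) := by
    refine le_trans hb ?_
    gcongr
  rw [Real.dist_eq, sub_zero, abs_of_nonneg (h0 n)]
  calc u n ≤ (ε ^ 2 / 4 + (ε / 2) ^ 2) / (2 * (ε / 2)) := this
    _ = ε / 2 := by field_simp; ring
    _ < ε := by linarith

/-- in the big-data limit `M → ∞`, the free energy of
unsupervised Hebbian learning converges to the free energy of the Hopfield
model. -/
theorem unsupervised_free_energy_tendsto_hopfield
    (N K : ℕ) (hN : 0 < N) (hK : 0 < K)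
    (β r : ℝ) (hβ : 0 < β) (hr0 : 0 < r) (hr1 : r ≤ 1)
    {Ω : Type} [MeasurableSpace Ω] (μ : Measure Ω) [IsProbabilityMeasure μ]
    (ξ : Fin N → Fin K → Ω → ℝ) (χ : Fin N → Fin K → ℕ → Ω → ℝ)
    (hmeasξ : ∀ i k, Measurable (ξ i k))
    (hmeasχ : ∀ i k a, Measurable (χ i k a))
    (hrangeξ : ∀ i k ω, ξ i k ω = 1 ∨ ξ i k ω = -1)
    (hrangeχ : ∀ i k a ω, χ i k a ω = 1 ∨ χ i k a ω = -1)
    (hlawξ : ∀ i k, μ {ω | ξ i k ω = 1} = ENNReal.ofReal (1 / 2)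
      ∧ μ {ω | ξ i k ω = -1} = ENNReal.ofReal (1 / 2))
    (hlawχ : ∀ i k a, μ {ω | χ i k a ω = 1} = ENNReal.ofReal ((1 + r) / 2)
      ∧ μ {ω | χ i k a ω = -1} = ENNReal.ofReal ((1 - r) / 2))
    (hindep : iIndepFun (m := fun _ => Real.measurableSpace)
      (Sum.elim (fun q : Fin N × Fin K => ξ q.1 q.2)
        (fun q : Fin N × Fin K × ℕ => χ q.1 q.2.1 q.2.2)) μ)
    (η : Fin N → Fin K → ℕ → Ω → ℝ)
    (hη : ∀ i k a ω, η i k a ω = χ i k a ω * ξ i k ω)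
    (R : ℕ → ℝ) (hR : ∀ M, R M = r ^ 2 + (1 - r ^ 2) / (M : ℝ))
    (AUns : ℕ → ℝ)
    (hAUns : ∀ M, AUns M = (1 / (N : ℝ)) * ∫ ω,
      Real.log (∑ σ : Fin N → Bool, Real.exp ((β / ((N : ℝ) * R M * M)) *
        ∑ k : Fin K, ∑ a ∈ Finset.range M, ∑ i : Fin N, ∑ j : Fin N, if i < j then
          η i k a ω * η j k a ω * spin (σ i) * spin (σ j) else 0)) ∂μ)
    (AHop : ℝ)
    (hAHop : AHop = (1 / (N : ℝ)) * ∫ ω,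
      Real.log (∑ σ : Fin N → Bool, Real.exp ((β / (N : ℝ)) *
        ∑ k : Fin K, ∑ i : Fin N, ∑ j : Fin N, if i < j then
          ξ i k ω * ξ j k ω * spin (σ i) * spin (σ j) else 0)) ∂μ) :
    Tendsto AUns atTop (nhds AHop) := by
  -- basic facts
  have hNR : (0:ℝ) < N := by exact_mod_cast hN
  have hr2 : (0:ℝ) < r ^ 2 := by positivity
  have hχ1 : ∀ i k a ω, |χ i k a ω| ≤ 1 := by
    intro i k a ω; rcases hrangeχ i k a ω with h | h <;> rw [h] <;> norm_num
  have hξ1 : ∀ i k ω, |ξ i k ω| ≤ 1 := by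
    intro i k ω; rcases hrangeξ i k ω with h | h <;> rw [h] <;> norm_num
  have hspin1 : ∀ b, |spin b| ≤ 1 := by intro b; cases b <;> simp [spin]
  have hχsq : ∀ i k a ω, χ i k a ω * χ i k a ω = 1 := by
    intro i k a ω; rcases hrangeχ i k a ω with h | h <;> rw [h] <;> norm_num
  have hmeasf : ∀ p, Measurable (Sum.elim (fun q : Fin N × Fin K => ξ q.1 q.2)
      (fun q : Fin N × Fin K × ℕ => χ q.1 q.2.1 q.2.2) p) := by
    rintro (⟨i, k⟩ | ⟨i, k, a⟩)
    exacts [hmeasξ i k, hmeasχ i k a]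
  have intχ : ∀ i k a, Integrable (χ i k a) μ := fun i k a =>
    integrable_of_bdd (hmeasχ i k a) (hχ1 i k a)
  have measX : ∀ (i j : Fin N) (k : Fin K) (a : ℕ),
      Measurable (fun ω => χ i k a ω * χ j k a ω) := fun i j k a =>
    (hmeasχ i k a).mul (hmeasχ j k a)
  have hX1 : ∀ (i j : Fin N) (k : Fin K) (a : ℕ) (ω : Ω),
      |χ i k a ω * χ j k a ω| ≤ 1 := by
    intro i j k a ω
    rw [abs_mul]
    exact mul_le_one₀ (hχ1 i k a ω) (abs_nonneg _) (hχ1 j k a ω)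
  have intX : ∀ (i j : Fin N) (k : Fin K) (a : ℕ),
      Integrable (fun ω => χ i k a ω * χ j k a ω) μ := fun i j k a =>
    integrable_of_bdd (measX i j k a) (hX1 i j k a)
  -- first moment of χ
  have Echi : ∀ i k a, ∫ ω, χ i k a ω ∂μ = r := by
    intro i k a
    have hA : MeasurableSet {ω | χ i k a ω = 1} := hmeasχ i k a (measurableSet_singleton 1)
    have hpt : ∀ ω, χ i k a ω
        = 2 * Set.indicator {ω | χ i k a ω = 1} (fun _ => (1:ℝ)) ω - 1 := by
      intro ω
      by_cases h : χ i k a ω = 1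
      · rw [Set.indicator_of_mem (by exact h)]
        rw [h]; ring
      · rcases hrangeχ i k a ω with h1 | h2
        · exact absurd h1 h
        · rw [Set.indicator_of_notMem (by exact h)]
          rw [h2]; ring
    have hint : Integrable (Set.indicator {ω | χ i k a ω = 1} (fun _ => (1:ℝ))) μ :=
      (integrable_const (1:ℝ)).indicator hA
    calc ∫ ω, χ i k a ω ∂μ
        = ∫ ω, (2 * Set.indicator {ω | χ i k a ω = 1} (fun _ => (1:ℝ)) ω - 1) ∂μ :=
          integral_congr_ae (ae_of_all _ hpt)
      _ = 2 * (μ {ω | χ i k a ω = 1}).toReal - 1 := by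
          rw [integral_sub (hint.const_mul 2) (integrable_const 1),
            integral_const_mul, integral_indicator_const _ hA, integral_const]
          simp [measureReal_def]
      _ = r := by
          rw [(hlawχ i k a).1, ENNReal.toReal_ofReal (by linarith)]
          ring
  -- second moment across sites
  have EX : ∀ (i j : Fin N) (k : Fin K) (a : ℕ), i ≠ j →
      ∫ ω, χ i k a ω * χ j k a ω ∂μ = r * r := by
    intro i j k a hij
    have hne : (Sum.inr (i, k, a) : (Fin N × Fin K) ⊕ (Fin N × Fin K × ℕ))
        ≠ Sum.inr (j, k, a) := by simp [hij]
    have hI : IndepFun (χ i k a) (χ j k a) μ := hindep.indepFun hne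
    have h2 := hI.integral_mul_eq_mul_integral (hmeasχ i k a).aestronglyMeasurable
      (hmeasχ j k a).aestronglyMeasurable
    have h3 : ∫ ω, χ i k a ω * χ j k a ω ∂μ
        = (∫ ω, χ i k a ω ∂μ) * ∫ ω, χ j k a ω ∂μ := h2
    rw [h3, Echi, Echi]
  have EXX : ∀ (i j : Fin N) (k : Fin K) (a b : ℕ), i ≠ j → a ≠ b →
      ∫ ω, (χ i k a ω * χ j k a ω) * (χ i k b ω * χ j k b ω) ∂μ = (r * r) * (r * r) := by
    intro i j k a b hij hab
    have hI : IndepFun (χ i k a * χ j k a) (χ i k b * χ j k b) μ := by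
      refine hindep.indepFun_mul_mul hmeasf (Sum.inr (i, k, a)) (Sum.inr (j, k, a))
        (Sum.inr (i, k, b)) (Sum.inr (j, k, b)) ?_ ?_ ?_ ?_ <;>
        simp [hij, hij.symm, hab, Prod.ext_iff]
    have h2 := hI.integral_mul_eq_mul_integral ((hmeasχ i k a).mul (hmeasχ j k a)).aestronglyMeasurable
      ((hmeasχ i k b).mul (hmeasχ j k b)).aestronglyMeasurable
    have h3 : ∫ ω, (χ i k a ω * χ j k a ω) * (χ i k b ω * χ j k b ω) ∂μ
        = (∫ ω, χ i k a ω * χ j k a ω ∂μ) * ∫ ω, χ i k b ω * χ j k b ω ∂μ := h2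
    rw [h3, EX i j k a hij, EX i j k b hij]
  -- centered second moment
  have Esq : ∀ (i j : Fin N) (k : Fin K) (a b : ℕ), i ≠ j →
      ∫ ω, (χ i k a ω * χ j k a ω - r ^ 2) * (χ i k b ω * χ j k b ω - r ^ 2) ∂μ
        = if a = b then 1 - r ^ 4 else 0 := by
    intro i j k a b hij
    have intXX : Integrable (fun ω => (χ i k a ω * χ j k a ω) * (χ i k b ω * χ j k b ω)) μ := by
      refine integrable_of_bdd ((measX i j k a).mul (measX i j k b)) (C := 1) fun ω => ?_
      rw [abs_mul]
      exact mul_le_one₀ (hX1 i j k a ω) (abs_nonneg _) (hX1 i j k b ω)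
    have hexp : (fun ω => (χ i k a ω * χ j k a ω - r ^ 2) * (χ i k b ω * χ j k b ω - r ^ 2))
        = fun ω => ((χ i k a ω * χ j k a ω) * (χ i k b ω * χ j k b ω)
            - r ^ 2 * (χ i k a ω * χ j k a ω)) - (r ^ 2 * (χ i k b ω * χ j k b ω) - r ^ 2 * r ^ 2) := by
      funext ω; ring
    have e1 : ∫ ω, (((χ i k a ω * χ j k a ω) * (χ i k b ω * χ j k b ω)
            - r ^ 2 * (χ i k a ω * χ j k a ω)) - (r ^ 2 * (χ i k b ω * χ j k b ω) - r ^ 2 * r ^ 2)) ∂μ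
        = ((∫ ω, (χ i k a ω * χ j k a ω) * (χ i k b ω * χ j k b ω) ∂μ)
            - r ^ 2 * ∫ ω, χ i k a ω * χ j k a ω ∂μ)
          - (r ^ 2 * (∫ ω, χ i k b ω * χ j k b ω ∂μ) - r ^ 2 * r ^ 2) := by
      have iA : Integrable (fun ω => (χ i k a ω * χ j k a ω) * (χ i k b ω * χ j k b ω)
          - r ^ 2 * (χ i k a ω * χ j k a ω)) μ := intXX.sub ((intX i j k a).const_mul _)
      have iB : Integrable (fun ω => r ^ 2 * (χ i k b ω * χ j k b ω) - r ^ 2 * r ^ 2) μ :=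
        ((intX i j k b).const_mul _).sub (integrable_const _)
      rw [integral_sub iA iB, integral_sub intXX ((intX i j k a).const_mul _),
        integral_sub ((intX i j k b).const_mul _) (integrable_const (r ^ 2 * r ^ 2)),
        integral_const_mul, integral_const_mul, integral_const]
      simp
    rw [hexp, e1]
    by_cases hab : a = b
    · subst hab
      have h1 : ∫ ω, (χ i k a ω * χ j k a ω) * (χ i k a ω * χ j k a ω) ∂μ = 1 := by
        have : (fun ω => (χ i k a ω * χ j k a ω) * (χ i k a ω * χ j k a ω)) = fun _ => (1:ℝ) := by
          funext ω
          have h2 := hχsq i k a ω; have h3 := hχsq j k a ω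
          nlinarith [h2, h3]
        rw [this, integral_const]; simp
      rw [h1, EX i j k a hij, if_pos rfl]
      ring
    · rw [EXX i j k a b hij hab, EX i j k a hij, EX i j k b hij, if_neg hab]
      ring
  -- variance bound
  have Var : ∀ (i j : Fin N) (k : Fin K) (M : ℕ), i ≠ j → 1 ≤ M →
      ∫ ω, ((∑ a ∈ Finset.range M, χ i k a ω * χ j k a ω) / M - r ^ 2) ^ 2 ∂μ ≤ 1 / M := by
    intro i j k M hij hM
    have hMpos : (0:ℝ) < M := by exact_mod_cast hM
    have hpt : ∀ ω, ((∑ a ∈ Finset.range M, χ i k a ω * χ j k a ω) / M - r ^ 2) ^ 2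
        = (∑ a ∈ Finset.range M, ∑ b ∈ Finset.range M,
            (χ i k a ω * χ j k a ω - r ^ 2) * (χ i k b ω * χ j k b ω - r ^ 2)) / (M:ℝ) ^ 2 := by
      intro ω
      have h1 : (∑ a ∈ Finset.range M, χ i k a ω * χ j k a ω) / M - r ^ 2
          = (∑ a ∈ Finset.range M, (χ i k a ω * χ j k a ω - r ^ 2)) / M := by
        rw [Finset.sum_sub_distrib, Finset.sum_const, Finset.card_range]
        field_simp
        rw [nsmul_eq_mul]
      rw [h1, div_pow, sq, Finset.sum_mul_sum]
    have intY : ∀ a b : ℕ, Integrable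
        (fun ω => (χ i k a ω * χ j k a ω - r ^ 2) * (χ i k b ω * χ j k b ω - r ^ 2)) μ := by
      intro a b
      refine integrable_of_bdd (((measX i j k a).sub_const _).mul ((measX i j k b).sub_const _))
        (C := 4) fun ω => ?_
      rw [abs_mul]
      have h1 : |χ i k a ω * χ j k a ω - r ^ 2| ≤ 2 := by
        have := hX1 i j k a ω
        have h2 : r ^ 2 ≤ 1 := by nlinarith
        rw [abs_le] at this ⊢; constructor <;> nlinarith [this.1, this.2]
      have h2 : |χ i k b ω * χ j k b ω - r ^ 2| ≤ 2 := by
        have := hX1 i j k b ω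
        have h2 : r ^ 2 ≤ 1 := by nlinarith
        rw [abs_le] at this ⊢; constructor <;> nlinarith [this.1, this.2]
      nlinarith [abs_nonneg (χ i k a ω * χ j k a ω - r ^ 2),
        abs_nonneg (χ i k b ω * χ j k b ω - r ^ 2)]
    calc ∫ ω, ((∑ a ∈ Finset.range M, χ i k a ω * χ j k a ω) / M - r ^ 2) ^ 2 ∂μ
        = (∑ a ∈ Finset.range M, ∑ b ∈ Finset.range M, ∫ ω,
            (χ i k a ω * χ j k a ω - r ^ 2) * (χ i k b ω * χ j k b ω - r ^ 2) ∂μ) / (M:ℝ) ^ 2 := by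
          rw [integral_congr_ae (ae_of_all _ hpt), integral_div]
          congr 1
          rw [integral_finset_sum _ fun a _ => integrable_finset_sum _ fun b _ => intY a b]
          exact Finset.sum_congr rfl fun a _ =>
            integral_finset_sum _ fun b _ => intY a b
      _ = (M * (1 - r ^ 4)) / (M:ℝ) ^ 2 := by
          congr 1
          rw [Finset.sum_congr rfl fun a _ => Finset.sum_congr rfl fun b _ => Esq i j k a b hij]
          rw [Finset.sum_congr rfl fun a (ha : a ∈ Finset.range M) =>
            Finset.sum_ite_eq (Finset.range M) a (fun _ => 1 - r ^ 4)]
          have hall : ∀ x ∈ Finset.range M, (if x ∈ Finset.range M then 1 - r ^ 4 else 0)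
              = 1 - r ^ 4 := fun x hx => if_pos hx
          rw [Finset.sum_congr rfl hall, Finset.sum_const, Finset.card_range, nsmul_eq_mul]
      _ ≤ 1 / M := by
          rw [div_le_div_iff₀ (by positivity) hMpos]
          have h4 : 0 ≤ r ^ 4 := by positivity
          nlinarith
  -- per-triple L¹ convergence
  have measY : ∀ (i j : Fin N) (k : Fin K) (M : ℕ),
      Measurable (fun ω => (∑ a ∈ Finset.range M, χ i k a ω * χ j k a ω) / M - r ^ 2) :=
    fun i j k M => ((Finset.measurable_sum _ fun a _ => measX i j k a).div_const _).sub
      measurable_const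
  have hYb : ∀ (i j : Fin N) (k : Fin K) (M : ℕ) (ω : Ω),
      |(∑ a ∈ Finset.range M, χ i k a ω * χ j k a ω) / M - r ^ 2| ≤ 2 := by
    intro i j k M ω
    have h1 : |(∑ a ∈ Finset.range M, χ i k a ω * χ j k a ω) / (M:ℝ)| ≤ 1 := by
      rcases Nat.eq_zero_or_pos M with hM | hM
      · subst hM; simp
      · have hMpos : (0:ℝ) < M := by exact_mod_cast hM
        rw [abs_div, abs_of_pos hMpos, div_le_one hMpos]
        calc |∑ a ∈ Finset.range M, χ i k a ω * χ j k a ω|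
            ≤ (Finset.range M).card * 1 :=
              abs_sum_le_card' _ _ 1 fun a _ => hX1 i j k a ω
          _ = (M:ℝ) := by rw [Finset.card_range]; ring
    have h2 : r ^ 2 ≤ 1 := by nlinarith
    have h0 : (0:ℝ) ≤ r ^ 2 := by positivity
    rw [abs_le] at h1 ⊢
    constructor <;> linarith [h1.1, h1.2]
  have intY1 : ∀ (i j : Fin N) (k : Fin K) (M : ℕ),
      Integrable (fun ω => |(∑ a ∈ Finset.range M, χ i k a ω * χ j k a ω) / M - r ^ 2|) μ :=
    fun i j k M => (integrable_of_bdd (measY i j k M) (hYb i j k M)).abs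
  have habs : ∀ (i j : Fin N) (k : Fin K), i ≠ j →
      Tendsto (fun M : ℕ => ∫ ω,
        |(∑ a ∈ Finset.range M, χ i k a ω * χ j k a ω) / M - r ^ 2| ∂μ) atTop (nhds 0) := by
    intro i j k hij
    apply tendsto_zero_of_eps_bound
    · intro M; exact integral_nonneg fun ω => abs_nonneg _
    · intro ε hε M hM
      have intSq : Integrable (fun ω =>
          ((∑ a ∈ Finset.range M, χ i k a ω * χ j k a ω) / M - r ^ 2) ^ 2) μ := by
        refine integrable_of_bdd ((measY i j k M).pow_const 2) (C := 4) fun ω => ?_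
        have := hYb i j k M ω
        rw [abs_le] at this ⊢
        constructor <;> nlinarith [this.1, this.2]
      have hpt : ∀ ω, |(∑ a ∈ Finset.range M, χ i k a ω * χ j k a ω) / M - r ^ 2|
          ≤ (((∑ a ∈ Finset.range M, χ i k a ω * χ j k a ω) / M - r ^ 2) ^ 2 + ε ^ 2)
            / (2 * ε) := by
        intro ω
        rw [le_div_iff₀ (by positivity)]
        nlinarith [sq_nonneg (|(∑ a ∈ Finset.range M, χ i k a ω * χ j k a ω) / M - r ^ 2| - ε),
          sq_abs ((∑ a ∈ Finset.range M, χ i k a ω * χ j k a ω) / M - r ^ 2)]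
      calc ∫ ω, |(∑ a ∈ Finset.range M, χ i k a ω * χ j k a ω) / M - r ^ 2| ∂μ
          ≤ ∫ ω, (((∑ a ∈ Finset.range M, χ i k a ω * χ j k a ω) / M - r ^ 2) ^ 2 + ε ^ 2)
              / (2 * ε) ∂μ :=
            integral_mono (intY1 i j k M) ((intSq.add (integrable_const _)).div_const _) hpt
        _ = ((∫ ω, ((∑ a ∈ Finset.range M, χ i k a ω * χ j k a ω) / M - r ^ 2) ^ 2 ∂μ) + ε ^ 2)
              / (2 * ε) := by
            rw [integral_div, integral_add intSq (integrable_const _), integral_const]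
            simp
        _ ≤ (1 / M + ε ^ 2) / (2 * ε) := by
            gcongr
            exact Var i j k M hij hM
  -- names for the two log-partition functions
  set LH : Ω → ℝ := fun ω => Real.log (∑ σ : Fin N → Bool, Real.exp ((β / (N : ℝ)) *
      ∑ k : Fin K, ∑ i : Fin N, ∑ j : Fin N, if i < j then
        ξ i k ω * ξ j k ω * spin (σ i) * spin (σ j) else 0)) with hLHdef
  set LM : ℕ → Ω → ℝ := fun M ω => Real.log (∑ σ : Fin N → Bool,
      Real.exp ((β / ((N : ℝ) * R M * M)) *
      ∑ k : Fin K, ∑ a ∈ Finset.range M, ∑ i : Fin N, ∑ j : Fin N, if i < j then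
        η i k a ω * η j k a ω * spin (σ i) * spin (σ j) else 0)) with hLMdef
  have hAHop' : AHop = (1 / (N : ℝ)) * ∫ ω, LH ω ∂μ := hAHop
  have hAUns' : ∀ M, AUns M = (1 / (N : ℝ)) * ∫ ω, LM M ω ∂μ := hAUns
  have hmeasη : ∀ i k a, Measurable (η i k a) := by
    intro i k a
    have : η i k a = fun ω => χ i k a ω * ξ i k ω := funext (hη i k a)
    rw [this]
    exact (hmeasχ i k a).mul (hmeasξ i k)
  have hη1 : ∀ i k a ω, |η i k a ω| ≤ 1 := by
    intro i k a ω
    rw [hη, abs_mul]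
    exact mul_le_one₀ (hχ1 i k a ω) (abs_nonneg _) (hξ1 i k ω)
  -- measurability of partition functions
  have measLH : Measurable LH := by
    rw [hLHdef]
    refine Measurable.log (Finset.measurable_sum _ fun σ _ => Measurable.exp ?_)
    refine (measurable_const.mul (Finset.measurable_sum _ fun k _ => ?_))
    refine Finset.measurable_sum _ fun i _ => Finset.measurable_sum _ fun j _ => ?_
    split_ifs with h
    · exact (((hmeasξ i k).mul (hmeasξ j k)).mul_const _).mul_const _
    · exact measurable_const
  have measLM : ∀ M, Measurable (LM M) := by
    intro M
    rw [hLMdef]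
    refine Measurable.log (Finset.measurable_sum _ fun σ _ => Measurable.exp ?_)
    refine (measurable_const.mul (Finset.measurable_sum _ fun k _ => ?_))
    refine Finset.measurable_sum _ fun a _ => Finset.measurable_sum _ fun i _ =>
      Finset.measurable_sum _ fun j _ => ?_
    split_ifs with h
    · exact (((hmeasη i k a).mul (hmeasη j k a)).mul_const _).mul_const _
    · exact measurable_const
  -- bounds on partition functions
  have habsH : ∀ (u : Fin N → Fin K → Ω → ℝ), (∀ i k ω, |u i k ω| ≤ 1) →
      ∀ ω (σ : Fin N → Bool), |∑ k : Fin K, ∑ i : Fin N, ∑ j : Fin N, if i < j then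
        u i k ω * u j k ω * spin (σ i) * spin (σ j) else 0| ≤ (K : ℝ) * ((N : ℝ) * (N : ℝ)) := by
    intro u hu ω σ
    have hterm : ∀ (k : Fin K) (i j : Fin N),
        |if i < j then u i k ω * u j k ω * spin (σ i) * spin (σ j) else 0| ≤ 1 := by
      intro k i j
      split_ifs with h
      · exact abs_mul4_le_one (hu i k ω) (hu j k ω) (hspin1 _) (hspin1 _)
      · simp
    calc |∑ k : Fin K, ∑ i : Fin N, ∑ j : Fin N, if i < j then
          u i k ω * u j k ω * spin (σ i) * spin (σ j) else 0|
        ≤ ((Finset.univ : Finset (Fin K)).card : ℝ) * ((N : ℝ) * (N : ℝ)) := by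
          refine abs_sum_le_card' _ _ _ fun k _ => ?_
          calc |∑ i : Fin N, ∑ j : Fin N, if i < j then
                u i k ω * u j k ω * spin (σ i) * spin (σ j) else 0|
              ≤ ((Finset.univ : Finset (Fin N)).card : ℝ) * ((N : ℝ) * 1) := by
                refine abs_sum_le_card' _ _ _ fun i _ => ?_
                calc |∑ j : Fin N, if i < j then
                      u i k ω * u j k ω * spin (σ i) * spin (σ j) else 0|
                    ≤ ((Finset.univ : Finset (Fin N)).card : ℝ) * 1 :=
                      abs_sum_le_card' _ _ _ fun j _ => hterm k i j
                  _ = (N : ℝ) * 1 := by simp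
            _ = (N : ℝ) * ((N : ℝ) * (N : ℝ) * ((N:ℝ))⁻¹) := by field_simp; simp
            _ = (N : ℝ) * (N : ℝ) := by field_simp
      _ = (K : ℝ) * ((N : ℝ) * (N : ℝ)) := by simp
  have hLHb : ∀ ω, |LH ω| ≤ |Real.log (Fintype.card (Fin N → Bool))|
      + (β / N) * ((K : ℝ) * ((N : ℝ) * (N : ℝ))) := by
    intro ω
    rw [hLHdef]
    refine abs_logsumexp_le _ _ fun σ => ?_
    rw [abs_mul, abs_of_pos (by positivity : (0:ℝ) < β / N)]
    exact mul_le_mul_of_nonneg_left (habsH ξ hξ1 ω σ) (by positivity)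
  have intLH : Integrable LH μ := integrable_of_bdd measLH hLHb
  -- bound for the unsupervised partition function
  have habsM : ∀ (M : ℕ) (ω : Ω) (σ : Fin N → Bool),
      |∑ k : Fin K, ∑ a ∈ Finset.range M, ∑ i : Fin N, ∑ j : Fin N, if i < j then
        η i k a ω * η j k a ω * spin (σ i) * spin (σ j) else 0|
      ≤ (K : ℝ) * ((M : ℝ) * ((N : ℝ) * (N : ℝ))) := by
    intro M ω σ
    have hterm : ∀ (k : Fin K) (a : ℕ) (i j : Fin N),
        |if i < j then η i k a ω * η j k a ω * spin (σ i) * spin (σ j) else 0| ≤ 1 := by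
      intro k a i j
      split_ifs with h
      · exact abs_mul4_le_one (hη1 i k a ω) (hη1 j k a ω) (hspin1 _) (hspin1 _)
      · simp
    have h3 : ∀ (k : Fin K) (a : ℕ) (i : Fin N), |∑ j : Fin N, if i < j then
        η i k a ω * η j k a ω * spin (σ i) * spin (σ j) else 0| ≤ (N : ℝ) := by
      intro k a i
      have := abs_sum_le_card' (Finset.univ : Finset (Fin N)) _ 1 fun j _ => hterm k a i j
      simpa using this
    have h2 : ∀ (k : Fin K) (a : ℕ), |∑ i : Fin N, ∑ j : Fin N, if i < j then
        η i k a ω * η j k a ω * spin (σ i) * spin (σ j) else 0| ≤ (N : ℝ) * (N : ℝ) := by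
      intro k a
      have := abs_sum_le_card' (Finset.univ : Finset (Fin N)) _ ((N : ℝ)) fun i _ => h3 k a i
      simpa using this
    have h1 : ∀ k : Fin K, |∑ a ∈ Finset.range M, ∑ i : Fin N, ∑ j : Fin N, if i < j then
        η i k a ω * η j k a ω * spin (σ i) * spin (σ j) else 0|
        ≤ (M : ℝ) * ((N : ℝ) * (N : ℝ)) := by
      intro k
      have := abs_sum_le_card' (Finset.range M) _ ((N : ℝ) * (N : ℝ)) fun a _ => h2 k a
      simpa using this
    have := abs_sum_le_card' (Finset.univ : Finset (Fin K)) _ ((M : ℝ) * ((N : ℝ) * (N : ℝ)))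
      fun k _ => h1 k
    simpa using this
  have hLMb : ∀ M ω, |LM M ω| ≤ |Real.log (Fintype.card (Fin N → Bool))|
      + |β / ((N : ℝ) * R M * M)| * ((K : ℝ) * ((M : ℝ) * ((N : ℝ) * (N : ℝ)))) := by
    intro M ω
    rw [hLMdef]
    refine abs_logsumexp_le _ _ fun σ => ?_
    rw [abs_mul]
    exact mul_le_mul_of_nonneg_left (habsM M ω σ) (abs_nonneg _)
  have intLM : ∀ M, Integrable (LM M) μ := fun M =>
    integrable_of_bdd (measLM M) (hLMb M)
  -- facts about R M for M ≥ 1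
  have hRM : ∀ M : ℕ, 1 ≤ M → R M * M = r ^ 2 * M + (1 - r ^ 2) := by
    intro M hM
    have hMne : (M : ℝ) ≠ 0 := by positivity
    rw [hR]; field_simp
  have hRMge : ∀ M : ℕ, 1 ≤ M → r ^ 2 * M ≤ R M * M := by
    intro M hM
    rw [hRM M hM]
    nlinarith
  have hRMpos : ∀ M : ℕ, 1 ≤ M → 0 < R M * M := by
    intro M hM
    have hMpos : (0:ℝ) < M := by exact_mod_cast hM
    have := hRMge M hM
    nlinarith
  -- Hamiltonian identity
  have hHam : ∀ M : ℕ, 1 ≤ M → ∀ (ω : Ω) (σ : Fin N → Bool),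
      (β / ((N : ℝ) * R M * M)) * (∑ k : Fin K, ∑ a ∈ Finset.range M, ∑ i : Fin N,
          ∑ j : Fin N, if i < j then η i k a ω * η j k a ω * spin (σ i) * spin (σ j) else 0)
        - (β / (N : ℝ)) * (∑ k : Fin K, ∑ i : Fin N, ∑ j : Fin N, if i < j then
          ξ i k ω * ξ j k ω * spin (σ i) * spin (σ j) else 0)
      = (β / (N : ℝ)) * ∑ k : Fin K, ∑ i : Fin N, ∑ j : Fin N, if i < j then
          ((∑ a ∈ Finset.range M, χ i k a ω * χ j k a ω) / (R M * M) - 1)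
            * (ξ i k ω * ξ j k ω * spin (σ i) * spin (σ j)) else 0 := by
    intro M hM ω σ
    have hMne : (M : ℝ) ≠ 0 := by positivity
    have hRne : R M * M ≠ 0 := ne_of_gt (hRMpos M hM)
    have hR0 : R M ≠ 0 := left_ne_zero_of_mul hRne
    have hNne : (N : ℝ) ≠ 0 := ne_of_gt hNR
    have e1 : ∀ k : Fin K, (∑ a ∈ Finset.range M, ∑ i : Fin N, ∑ j : Fin N,
        if i < j then η i k a ω * η j k a ω * spin (σ i) * spin (σ j) else 0)
        = ∑ i : Fin N, ∑ j : Fin N, if i < j then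
            (∑ a ∈ Finset.range M, χ i k a ω * χ j k a ω)
              * (ξ i k ω * ξ j k ω * spin (σ i) * spin (σ j)) else 0 := by
      intro k
      rw [Finset.sum_comm]
      refine Finset.sum_congr rfl fun i _ => ?_
      rw [Finset.sum_comm]
      refine Finset.sum_congr rfl fun j _ => ?_
      split_ifs with h
      · rw [Finset.sum_mul]
        refine Finset.sum_congr rfl fun a _ => ?_
        rw [hη, hη]; ring
      · simp
    rw [Finset.sum_congr rfl fun k _ => e1 k]
    simp only [Finset.mul_sum, ← Finset.sum_sub_distrib]
    refine Finset.sum_congr rfl fun k _ => ?_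
    refine Finset.sum_congr rfl fun i _ => ?_
    refine Finset.sum_congr rfl fun j _ => ?_
    split_ifs with h
    · field_simp
    · simp
  -- pointwise bound on the difference of log-partition functions
  have hFb : ∀ M : ℕ, 1 ≤ M → ∀ ω : Ω, |LM M ω - LH ω|
      ≤ (β / (N : ℝ)) * ∑ k : Fin K, ∑ i : Fin N, ∑ j : Fin N, if i < j then
          |(∑ a ∈ Finset.range M, χ i k a ω * χ j k a ω) / (R M * M) - 1| else 0 := by
    intro M hM ω
    rw [hLMdef, hLHdef]
    refine logsumexp_lip _ _ _ fun σ => ?_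
    rw [hHam M hM ω σ, abs_mul, abs_of_pos (by positivity : (0:ℝ) < β / N)]
    refine mul_le_mul_of_nonneg_left ?_ (by positivity)
    calc |∑ k : Fin K, ∑ i : Fin N, ∑ j : Fin N, if i < j then
          ((∑ a ∈ Finset.range M, χ i k a ω * χ j k a ω) / (R M * M) - 1)
            * (ξ i k ω * ξ j k ω * spin (σ i) * spin (σ j)) else 0|
        ≤ ∑ k : Fin K, |∑ i : Fin N, ∑ j : Fin N, if i < j then
            ((∑ a ∈ Finset.range M, χ i k a ω * χ j k a ω) / (R M * M) - 1)
              * (ξ i k ω * ξ j k ω * spin (σ i) * spin (σ j)) else 0| :=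
          Finset.abs_sum_le_sum_abs _ _
      _ ≤ ∑ k : Fin K, ∑ i : Fin N, ∑ j : Fin N, if i < j then
            |(∑ a ∈ Finset.range M, χ i k a ω * χ j k a ω) / (R M * M) - 1| else 0 := by
          refine Finset.sum_le_sum fun k _ => ?_
          calc |∑ i : Fin N, ∑ j : Fin N, if i < j then
                ((∑ a ∈ Finset.range M, χ i k a ω * χ j k a ω) / (R M * M) - 1)
                  * (ξ i k ω * ξ j k ω * spin (σ i) * spin (σ j)) else 0|
              ≤ ∑ i : Fin N, |∑ j : Fin N, if i < j then
                  ((∑ a ∈ Finset.range M, χ i k a ω * χ j k a ω) / (R M * M) - 1)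
                    * (ξ i k ω * ξ j k ω * spin (σ i) * spin (σ j)) else 0| :=
                Finset.abs_sum_le_sum_abs _ _
            _ ≤ ∑ i : Fin N, ∑ j : Fin N, if i < j then
                  |(∑ a ∈ Finset.range M, χ i k a ω * χ j k a ω) / (R M * M) - 1| else 0 := by
                refine Finset.sum_le_sum fun i _ => ?_
                calc |∑ j : Fin N, if i < j then
                      ((∑ a ∈ Finset.range M, χ i k a ω * χ j k a ω) / (R M * M) - 1)
                        * (ξ i k ω * ξ j k ω * spin (σ i) * spin (σ j)) else 0|
                    ≤ ∑ j : Fin N, |if i < j then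
                        ((∑ a ∈ Finset.range M, χ i k a ω * χ j k a ω) / (R M * M) - 1)
                          * (ξ i k ω * ξ j k ω * spin (σ i) * spin (σ j)) else 0| :=
                      Finset.abs_sum_le_sum_abs _ _
                  _ ≤ ∑ j : Fin N, if i < j then
                        |(∑ a ∈ Finset.range M, χ i k a ω * χ j k a ω) / (R M * M) - 1|
                        else 0 := by
                      refine Finset.sum_le_sum fun j _ => ?_
                      split_ifs with h
                      · rw [abs_mul]
                        calc |(∑ a ∈ Finset.range M, χ i k a ω * χ j k a ω) / (R M * M) - 1|
                              * |ξ i k ω * ξ j k ω * spin (σ i) * spin (σ j)|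
                            ≤ |(∑ a ∈ Finset.range M, χ i k a ω * χ j k a ω) / (R M * M) - 1|
                              * 1 := by
                              refine mul_le_mul_of_nonneg_left ?_ (abs_nonneg _)
                              exact abs_mul4_le_one (hξ1 i k ω) (hξ1 j k ω) (hspin1 _) (hspin1 _)
                          _ = _ := mul_one _
                      · simp
  -- measurability / boundedness of the |T - 1| terms
  have measT : ∀ (i j : Fin N) (k : Fin K) (M : ℕ), Measurable
      (fun ω => |(∑ a ∈ Finset.range M, χ i k a ω * χ j k a ω) / (R M * M) - 1|) :=
    fun i j k M => (((Finset.measurable_sum _ fun a _ => measX i j k a).div_const _).sub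
      measurable_const).abs
  have hTb : ∀ (i j : Fin N) (k : Fin K) (M : ℕ), 1 ≤ M → ∀ ω,
      |(∑ a ∈ Finset.range M, χ i k a ω * χ j k a ω) / (R M * M) - 1| ≤ 1 / r ^ 2 + 1 := by
    intro i j k M hM ω
    have hMpos : (0:ℝ) < M := by exact_mod_cast hM
    have h1 : |(∑ a ∈ Finset.range M, χ i k a ω * χ j k a ω) / (R M * M)| ≤ 1 / r ^ 2 := by
      rw [abs_div, abs_of_pos (hRMpos M hM)]
      have hs : |∑ a ∈ Finset.range M, χ i k a ω * χ j k a ω| ≤ (M : ℝ) := by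
        have := abs_sum_le_card' (Finset.range M) _ 1 fun a _ => hX1 i j k a ω
        simpa using this
      calc |∑ a ∈ Finset.range M, χ i k a ω * χ j k a ω| / (R M * M)
          ≤ (M : ℝ) / (r ^ 2 * M) :=
            div_le_div₀ (by positivity) hs (by positivity) (hRMge M hM)
        _ = 1 / r ^ 2 := by field_simp
    calc |(∑ a ∈ Finset.range M, χ i k a ω * χ j k a ω) / (R M * M) - 1|
        ≤ |(∑ a ∈ Finset.range M, χ i k a ω * χ j k a ω) / (R M * M)| + 1 := by
          have := abs_sub_abs_le_abs_sub ((∑ a ∈ Finset.range M, χ i k a ω * χ j k a ω)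
            / (R M * M)) 1
          have h2 := abs_sub ((∑ a ∈ Finset.range M, χ i k a ω * χ j k a ω) / (R M * M)) (1:ℝ)
          simpa using h2
      _ ≤ 1 / r ^ 2 + 1 := by linarith
  have intT : ∀ (i j : Fin N) (k : Fin K) (M : ℕ), 1 ≤ M → Integrable
      (fun ω => |(∑ a ∈ Finset.range M, χ i k a ω * χ j k a ω) / (R M * M) - 1|) μ :=
    fun i j k M hM => integrable_of_bdd (measT i j k M)
      (fun ω => by rw [abs_abs]; exact hTb i j k M hM ω)
  -- integral of the bounding function
  have intTerm : ∀ (M : ℕ), 1 ≤ M → ∀ (k : Fin K) (i j : Fin N), Integrable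
      (fun ω => if i < j then
        |(∑ a ∈ Finset.range M, χ i k a ω * χ j k a ω) / (R M * M) - 1| else 0) μ := by
    intro M hM k i j
    by_cases h : i < j
    · simp only [if_pos h]; exact intT i j k M hM
    · simp only [if_neg h]; exact integrable_const 0
  have intF : ∀ (M : ℕ), 1 ≤ M → Integrable (fun ω => (β / (N : ℝ)) *
      ∑ k : Fin K, ∑ i : Fin N, ∑ j : Fin N, if i < j then
        |(∑ a ∈ Finset.range M, χ i k a ω * χ j k a ω) / (R M * M) - 1| else 0) μ :=
    fun M hM => (integrable_finset_sum _ fun k _ => integrable_finset_sum _ fun i _ =>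
      integrable_finset_sum _ fun j _ => intTerm M hM k i j).const_mul _
  have hIntF : ∀ (M : ℕ), 1 ≤ M → ∫ ω, ((β / (N : ℝ)) *
      ∑ k : Fin K, ∑ i : Fin N, ∑ j : Fin N, if i < j then
        |(∑ a ∈ Finset.range M, χ i k a ω * χ j k a ω) / (R M * M) - 1| else 0) ∂μ
      = (β / (N : ℝ)) * ∑ k : Fin K, ∑ i : Fin N, ∑ j : Fin N, if i < j then
        ∫ ω, |(∑ a ∈ Finset.range M, χ i k a ω * χ j k a ω) / (R M * M) - 1| ∂μ else 0 := by
    intro M hM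
    rw [integral_const_mul]
    congr 1
    rw [integral_finset_sum _ fun k _ => integrable_finset_sum _ fun i _ =>
      integrable_finset_sum _ fun j _ => intTerm M hM k i j]
    refine Finset.sum_congr rfl fun k _ => ?_
    rw [integral_finset_sum _ fun i _ => integrable_finset_sum _ fun j _ => intTerm M hM k i j]
    refine Finset.sum_congr rfl fun i _ => ?_
    rw [integral_finset_sum _ fun j _ => intTerm M hM k i j]
    refine Finset.sum_congr rfl fun j _ => ?_
    by_cases h : i < j
    · simp only [if_pos h]
    · simp only [if_neg h, integral_zero]
  -- comparison of the |T-1| integral with the centered one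
  have hTint : ∀ (i j : Fin N) (k : Fin K) (M : ℕ), 1 ≤ M →
      ∫ ω, |(∑ a ∈ Finset.range M, χ i k a ω * χ j k a ω) / (R M * M) - 1| ∂μ
      ≤ (1 / r ^ 2) * (∫ ω, |(∑ a ∈ Finset.range M, χ i k a ω * χ j k a ω) / M - r ^ 2| ∂μ)
        + (1 - r ^ 2) / (r ^ 2 * M) := by
    intro i j k M hM
    have hMpos : (0:ℝ) < M := by exact_mod_cast hM
    have hr2le : r ^ 2 ≤ 1 := by nlinarith
    have hpt : ∀ ω, |(∑ a ∈ Finset.range M, χ i k a ω * χ j k a ω) / (R M * M) - 1|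
        ≤ (1 / r ^ 2) * |(∑ a ∈ Finset.range M, χ i k a ω * χ j k a ω) / M - r ^ 2|
          + (1 - r ^ 2) / (r ^ 2 * M) := by
      intro ω
      set s := ∑ a ∈ Finset.range M, χ i k a ω * χ j k a ω with hs
      have hPpos := hRMpos M hM
      have h1 : s / (R M * M) - 1 = (s - R M * M) / (R M * M) := by
          rw [sub_div, div_self (ne_of_gt hPpos)]
      have h2 : s - R M * M = (M : ℝ) * (s / M - r ^ 2) - (1 - r ^ 2) := by
        rw [hRM M hM]; field_simp; ring
      have h3 : |s - R M * M| ≤ (M : ℝ) * |s / M - r ^ 2| + (1 - r ^ 2) := by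
        rw [h2]
        calc |(M : ℝ) * (s / M - r ^ 2) - (1 - r ^ 2)|
            ≤ |(M : ℝ) * (s / M - r ^ 2)| + |1 - r ^ 2| := abs_sub _ _
          _ = (M : ℝ) * |s / M - r ^ 2| + (1 - r ^ 2) := by
              rw [abs_mul, abs_of_pos hMpos,
                abs_of_nonneg (show (0:ℝ) ≤ 1 - r ^ 2 by linarith)]
      calc |s / (R M * M) - 1| = |s - R M * M| / (R M * M) := by
            rw [h1, abs_div, abs_of_pos hPpos]
        _ ≤ ((M : ℝ) * |s / M - r ^ 2| + (1 - r ^ 2)) / (r ^ 2 * M) :=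
            div_le_div₀ (by have := abs_nonneg (s / (M:ℝ) - r ^ 2); nlinarith) h3
              (by positivity) (hRMge M hM)
        _ = (1 / r ^ 2) * |s / M - r ^ 2| + (1 - r ^ 2) / (r ^ 2 * M) := by
            field_simp
    calc ∫ ω, |(∑ a ∈ Finset.range M, χ i k a ω * χ j k a ω) / (R M * M) - 1| ∂μ
        ≤ ∫ ω, ((1 / r ^ 2) * |(∑ a ∈ Finset.range M, χ i k a ω * χ j k a ω) / M - r ^ 2|
            + (1 - r ^ 2) / (r ^ 2 * M)) ∂μ :=
          integral_mono (intT i j k M hM)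
            (((intY1 i j k M).const_mul _).add (integrable_const _)) hpt
      _ = (1 / r ^ 2) * (∫ ω, |(∑ a ∈ Finset.range M, χ i k a ω * χ j k a ω) / M - r ^ 2| ∂μ)
            + (1 - r ^ 2) / (r ^ 2 * M) := by
          rw [integral_add ((intY1 i j k M).const_mul _) (integrable_const _),
            integral_const_mul, integral_const]
          simp
  -- the main estimate
  have hMain : ∀ M : ℕ, 1 ≤ M → |AUns M - AHop|
      ≤ (1 / (N : ℝ)) * ((β / (N : ℝ)) * ∑ k : Fin K, ∑ i : Fin N, ∑ j : Fin N, if i < j then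
          (1 / r ^ 2) * (∫ ω, |(∑ a ∈ Finset.range M, χ i k a ω * χ j k a ω) / M - r ^ 2| ∂μ)
            + (1 - r ^ 2) / (r ^ 2 * M) else 0) := by
    intro M hM
    have e2 : AUns M - AHop = (1 / (N : ℝ)) * ∫ ω, (LM M ω - LH ω) ∂μ := by
      rw [hAUns' M, hAHop', ← mul_sub, integral_sub (intLM M) intLH]
    calc |AUns M - AHop| = (1 / (N : ℝ)) * |∫ ω, (LM M ω - LH ω) ∂μ| := by
          rw [e2, abs_mul, abs_of_pos (by positivity : (0:ℝ) < 1 / N)]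
      _ ≤ (1 / (N : ℝ)) * ∫ ω, |LM M ω - LH ω| ∂μ :=
          mul_le_mul_of_nonneg_left (by
            simpa [Real.norm_eq_abs] using
              norm_integral_le_integral_norm (μ := μ) (fun ω => LM M ω - LH ω))
            (by positivity)
      _ ≤ (1 / (N : ℝ)) * ∫ ω, ((β / (N : ℝ)) *
            ∑ k : Fin K, ∑ i : Fin N, ∑ j : Fin N, if i < j then
              |(∑ a ∈ Finset.range M, χ i k a ω * χ j k a ω) / (R M * M) - 1| else 0) ∂μ := by
          refine mul_le_mul_of_nonneg_left ?_ (by positivity)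
          exact integral_mono ((intLM M).sub intLH).abs (intF M hM) (hFb M hM)
      _ = (1 / (N : ℝ)) * ((β / (N : ℝ)) * ∑ k : Fin K, ∑ i : Fin N, ∑ j : Fin N, if i < j then
            ∫ ω, |(∑ a ∈ Finset.range M, χ i k a ω * χ j k a ω) / (R M * M) - 1| ∂μ else 0) := by
          rw [hIntF M hM]
      _ ≤ (1 / (N : ℝ)) * ((β / (N : ℝ)) * ∑ k : Fin K, ∑ i : Fin N, ∑ j : Fin N, if i < j then
            (1 / r ^ 2) * (∫ ω, |(∑ a ∈ Finset.range M, χ i k a ω * χ j k a ω) / M - r ^ 2| ∂μ)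
              + (1 - r ^ 2) / (r ^ 2 * M) else 0) := by
          refine mul_le_mul_of_nonneg_left (mul_le_mul_of_nonneg_left ?_ (by positivity))
            (by positivity)
          refine Finset.sum_le_sum fun k _ => Finset.sum_le_sum fun i _ =>
            Finset.sum_le_sum fun j _ => ?_
          by_cases h : i < j
          · simp only [if_pos h]
            exact hTint i j k M hM
          · simp only [if_neg h]; exact le_refl 0
  -- the bounding sequence tends to zero
  have hg0 : Tendsto (fun M : ℕ => (1 / (N : ℝ)) * ((β / (N : ℝ)) *
      ∑ k : Fin K, ∑ i : Fin N, ∑ j : Fin N, if i < j then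
        (1 / r ^ 2) * (∫ ω, |(∑ a ∈ Finset.range M, χ i k a ω * χ j k a ω) / M - r ^ 2| ∂μ)
          + (1 - r ^ 2) / (r ^ 2 * M) else 0)) atTop (nhds 0) := by
    have h0 : ((1 / (N : ℝ)) * ((β / (N : ℝ)) *
        ∑ _k : Fin K, ∑ _i : Fin N, ∑ _j : Fin N, (0:ℝ))) = 0 := by simp
    have hterm : ∀ (k : Fin K) (i j : Fin N), Tendsto (fun M : ℕ => if i < j then
        (1 / r ^ 2) * (∫ ω, |(∑ a ∈ Finset.range M, χ i k a ω * χ j k a ω) / M - r ^ 2| ∂μ)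
          + (1 - r ^ 2) / (r ^ 2 * M) else 0) atTop (nhds 0) := by
      intro k i j
      by_cases h : i < j
      · simp only [if_pos h]
        have hij : i ≠ j := ne_of_lt h
        have t1 := (habs i j k hij).const_mul (1 / r ^ 2)
        have t2 : Tendsto (fun M : ℕ => (1 - r ^ 2) / (r ^ 2 * M)) atTop (nhds 0) := by
          have := tendsto_const_div_atTop_nhds_zero_nat ((1 - r ^ 2) / r ^ 2)
          refine this.congr fun M => ?_
          rw [div_div]
        simpa using t1.add t2
      · simp only [if_neg h]
        exact tendsto_const_nhds
    have htot := Tendsto.const_mul (1 / (N : ℝ)) (Tendsto.const_mul (β / (N : ℝ))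
      (tendsto_finset_sum (Finset.univ : Finset (Fin K)) fun k _ =>
        tendsto_finset_sum Finset.univ fun i _ =>
          tendsto_finset_sum Finset.univ fun j _ => hterm k i j))
    simpa using htot
  -- conclusion
  rw [tendsto_iff_dist_tendsto_zero]
  refine squeeze_zero' (Eventually.of_forall fun M => dist_nonneg) ?_ hg0
  filter_upwards [eventually_ge_atTop 1] with M hM
  rw [Real.dist_eq]
  exact hMain M hM
end
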